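/- arXiv:1608.01596 — 9 statements merged into one kernel-verified Lean document; each statement's English description precedes it below -/
import Mathlib

section
/- Let V : [1,∞) → (0,∞) be continuous and suppose that (i) ∫₁^∞ s/V(s) ds = ∞ (parabolicity), and (ii) there is a constant C > 0 such that ∫₁^r s/V(s) ds ≤ C·r²/V(r) for all r ≥ 1 (subcriticality). Then V(r)·log r / r² → 0 as r → ∞. -/
open MeasureTheory Filter

/-- A continuous positive volume function `V` on `[1,∞)` that is parabolic
(`∫₁^∞ s/V(s) ds = ∞`) and subcritical (`∫₁^r s/V(s) ds ≤ C r²/V(r)`)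
satisfies `V(r) = o(r²/log r)` as `r → ∞`. -/
theorem stmt_1 (V : ℝ → ℝ)
    (hVpos : ∀ r ∈ Set.Ici (1:ℝ), 0 < V r)
    (hVcont : ContinuousOn V (Set.Ici (1:ℝ)))
    (hpar : ∫⁻ s in Set.Ici (1:ℝ), ENNReal.ofReal (s / V s) = ⊤)
    (C : ℝ) (hC : 0 < C)
    (hsub : ∀ r ≥ (1:ℝ), (∫ s in (1:ℝ)..r, s / V s) ≤ C * r ^ 2 / V r) :
    Tendsto (fun r => V r * Real.log r / r ^ 2) atTop (nhds 0) := by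
  have hC' : (0:ℝ) < 1/C := by positivity
  set f : ℝ → ℝ := fun s => s / V s with hf
  set F : ℝ → ℝ := fun r => ∫ s in (1:ℝ)..r, s / V s with hFdef
  have hfc : ContinuousOn f (Set.Ici 1) :=
    continuousOn_id.div hVcont (fun x hx => (hVpos x hx).ne')
  have hfpos : ∀ s ∈ Set.Ici (1:ℝ), 0 < f s := fun s hs =>
    div_pos (lt_of_lt_of_le zero_lt_one hs) (hVpos s hs)
  have hfint : ∀ r, 1 ≤ r → IntervalIntegrable f volume 1 r := fun r hr =>
    (hfc.mono (by rw [Set.uIcc_of_le hr]; exact Set.Icc_subset_Ici_self)).intervalIntegrable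
  have hF' : ∀ r, 1 < r → HasDerivAt F (f r) r := by
    intro r hr
    have hmem : Set.Ici (1:ℝ) ∈ nhds r := Ici_mem_nhds hr
    have hcf : ContinuousAt f r := hfc.continuousAt hmem
    have hsm : StronglyMeasurableAtFilter f (nhds r) volume :=
      (hfc.mono (Set.Ioi_subset_Ici le_rfl)).stronglyMeasurableAtFilter isOpen_Ioi r hr
    exact intervalIntegral.integral_hasDerivAt_right (hfint r hr.le) hsm hcf
  have Fpos : ∀ r, 2 ≤ r → 0 < F r := by
    intro r hr
    exact intervalIntegral.intervalIntegral_pos_of_pos_on (hfint r (by linarith))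
      (fun x hx => hfpos x (le_of_lt hx.1)) (by linarith)
  set H : ℝ → ℝ := fun t => Real.log (F t) - (1/C) * Real.log t with hHdef
  have hFH : ∀ r, 2 ≤ r → HasDerivAt H (f r / F r - (1/C) * r⁻¹) r := by
    intro r hr
    have h1 : HasDerivAt (fun t => Real.log (F t)) (f r / F r) r :=
      (hF' r (by linarith)).log (Fpos r hr).ne'
    have h2 : HasDerivAt (fun t => (1/C) * Real.log t) ((1/C) * r⁻¹) r :=
      (Real.hasDerivAt_log (by positivity)).const_mul (1/C)
    exact h1.sub h2
  have hmono : MonotoneOn H (Set.Ici 2) := by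
    apply monotoneOn_of_deriv_nonneg (convex_Ici 2)
    · exact fun r hr => (hFH r hr).continuousAt.continuousWithinAt
    · intro r hr
      rw [interior_Ici] at hr
      exact (hFH r hr.le).differentiableAt.differentiableWithinAt
    · intro r hr
      rw [interior_Ici] at hr
      have hr2 : (2:ℝ) ≤ r := hr.le
      rw [(hFH r hr2).deriv]
      have hVr : 0 < V r := hVpos r (by simp; linarith)
      have hFr := Fpos r hr2
      have hrpos : (0:ℝ) < r := by linarith
      have hsub' := hsub r (by linarith)
      have key : (1/C) * r⁻¹ ≤ f r / F r := by
        have h1 : (1/C) * r⁻¹ = 1 / (C * r) := by field_simp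
        rw [h1, div_le_div_iff₀ (by positivity) hFr, one_mul]
        have h2 : f r * (C * r) = C * r ^ 2 / V r := by
          simp only [hf]; field_simp
        rw [h2]
        exact hsub'
      linarith
  have hgrow : ∀ r, 2 ≤ r → F 2 * (r/2) ^ (1/C) ≤ F r := by
    intro r hr
    have hF2 := Fpos 2 le_rfl
    have hFr := Fpos r hr
    have hH2 : H 2 ≤ H r := hmono Set.self_mem_Ici hr hr
    have hlog : Real.log (F 2) + Real.log ((r/2) ^ (1/C)) ≤ Real.log (F r) := by
      have hrp : (0:ℝ) < r/2 := by linarith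
      rw [Real.log_rpow hrp, Real.log_div (by linarith) two_ne_zero]
      simp only [hHdef] at hH2
      linarith
    calc F 2 * (r/2) ^ (1/C)
        = Real.exp (Real.log (F 2) + Real.log ((r/2) ^ (1/C))) := by
          rw [Real.exp_add, Real.exp_log hF2,
            Real.exp_log (Real.rpow_pos_of_pos (by linarith) _)]
      _ ≤ Real.exp (Real.log (F r)) := Real.exp_le_exp.mpr hlog
      _ = F r := Real.exp_log hFr
  have hF2 := Fpos 2 le_rfl
  have hlim : Tendsto (fun r => (C * (2:ℝ) ^ (1/C) / F 2) * (Real.log r / r ^ (1/C)))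
      atTop (nhds 0) := by
    have h := (isLittleO_log_rpow_atTop hC').tendsto_div_nhds_zero
    have := h.const_mul (C * (2:ℝ) ^ (1/C) / F 2)
    simpa using this
  apply squeeze_zero' (g := fun r => (C * (2:ℝ) ^ (1/C) / F 2) * (Real.log r / r ^ (1/C)))
    ?_ ?_ hlim
  · filter_upwards [eventually_ge_atTop (2:ℝ)] with r hr
    have hVr : 0 < V r := hVpos r (by simp; linarith)
    have hlogr : 0 ≤ Real.log r := Real.log_nonneg (by linarith)
    positivity
  · filter_upwards [eventually_ge_atTop (2:ℝ)] with r hr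
    have hVr : 0 < V r := hVpos r (by simp; linarith)
    have hFr := Fpos r hr
    have hlogr : 0 ≤ Real.log r := Real.log_nonneg (by linarith)
    have hrpos : (0:ℝ) < r := by linarith
    have hFV : F r * V r ≤ C * r ^ 2 := by
      have := hsub r (by linarith)
      rwa [le_div_iff₀ hVr] at this
    have step1 : V r * Real.log r / r ^ 2 ≤ C * Real.log r / F r := by
      rw [div_le_div_iff₀ (by positivity) hFr]
      nlinarith [mul_le_mul_of_nonneg_right hFV hlogr]
    have hA : (0:ℝ) < r ^ (1/C) := Real.rpow_pos_of_pos hrpos _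
    have hB : (0:ℝ) < (2:ℝ) ^ (1/C) := Real.rpow_pos_of_pos two_pos _
    have hdiv : (r/2) ^ (1/C) = r ^ (1/C) / (2:ℝ) ^ (1/C) :=
      Real.div_rpow hrpos.le (by norm_num) _
    have step2 : C * Real.log r / F r ≤ C * (2:ℝ) ^ (1/C) / F 2 * (Real.log r / r ^ (1/C)) := by
      have hlow : 0 < F 2 * (r/2) ^ (1/C) := by
        rw [hdiv]; positivity
      have h1 : C * Real.log r / F r ≤ C * Real.log r / (F 2 * (r/2) ^ (1/C)) :=
        div_le_div_of_nonneg_left (by positivity) hlow (hgrow r hr)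
      have h2 : C * Real.log r / (F 2 * (r/2) ^ (1/C))
          = C * (2:ℝ) ^ (1/C) / F 2 * (Real.log r / r ^ (1/C)) := by
        rw [hdiv]; field_simp
      linarith [h1, h2.le, h2.ge]
    exact step1.trans step2
end

section
/- Let V : [1,∞) → (0,∞) be continuous, and suppose there are constants b > 0, C > 0 and r₀ ≥ 1 such that b ≤ ∫₁^r s/V(s) ds ≤ C·r²/V(r) for all r ≥ r₀. Then there exist a constant C' > 0 and r₁ ≥ 1 such that (log r)² ≤ C'·r²/V(r) for all r ≥ r₁. -/
/-!
Write `F r = ∫₁^r s/V(s) ds` and `L r = log r - log r₀`. The upper bound says `F' = r/V(r) ≥ F/(C r)`,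
so a lower bound `F ≥ c Lⁿ` on `[r₀, ∞)` integrates (against `dt/t`) to `F ≥ c Lⁿ⁺¹ / (C (n+1))`.
Starting from `F ≥ b` and bootstrapping twice gives `F ≥ b L² / (2 C²)`, and `log r ≤ 2 L r` once
`r ≥ r₀²`.
-/

open MeasureTheory Filter

open Real intervalIntegral

theorem continuousOn_log_sub_pow_div_self (n : ℕ) {r₀ r : ℝ} (hr₀ : 0 < r₀) (hr : r₀ ≤ r) :
    ContinuousOn (fun t => (log t - log r₀) ^ n / t) (Set.uIcc r₀ r) := by
  have hpos : ∀ t ∈ Set.uIcc r₀ r, t ≠ 0 := fun t ht =>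
    (hr₀.trans_le (Set.uIcc_of_le hr ▸ ht).1).ne'
  exact (((continuousOn_log.mono fun t ht => hpos t ht).sub continuousOn_const).pow n).div
    continuousOn_id hpos

theorem integral_log_sub_pow_div_self (n : ℕ) {r₀ r : ℝ} (hr₀ : 0 < r₀) (hr : r₀ ≤ r) :
    ∫ t in r₀..r, (log t - log r₀) ^ n / t = (log r - log r₀) ^ (n + 1) / (n + 1) := by
  have hderiv : ∀ t ∈ Set.uIcc r₀ r,
      HasDerivAt (fun x => (log x - log r₀) ^ (n + 1) / (n + 1)) ((log t - log r₀) ^ n / t) t := by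
    intro t ht
    have ht₀ : t ≠ 0 := (hr₀.trans_le (Set.uIcc_of_le hr ▸ ht).1).ne'
    refine (((hasDerivAt_log ht₀).sub_const (log r₀)).fun_pow (n + 1)).div_const
      ((n : ℝ) + 1) |>.congr_deriv ?_
    push_cast
    field_simp
  rw [integral_eq_sub_of_hasDerivAt hderiv
    (continuousOn_log_sub_pow_div_self n hr₀ hr).intervalIntegrable]
  simp

theorem mul_log_sub_pow_succ_le_integral {f : ℝ → ℝ} {a r₀ C c : ℝ} {n : ℕ}
    (hr₀ : 0 < r₀) (hC : 0 < C)
    (hint : ∀ r ≥ r₀, IntervalIntegrable f volume a r)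
    (hf : ∀ t ≥ r₀, ∫ s in a..t, f s ≤ C * t * f t)
    (hF₀ : 0 ≤ ∫ s in a..r₀, f s)
    (hlow : ∀ t ≥ r₀, c * (log t - log r₀) ^ n ≤ ∫ s in a..t, f s)
    {r : ℝ} (hr : r₀ ≤ r) :
    c / (C * (n + 1)) * (log r - log r₀) ^ (n + 1) ≤ ∫ s in a..r, f s := by
  have hsplit : ∫ s in a..r, f s = (∫ s in a..r₀, f s) + ∫ s in r₀..r, f s :=
    (integral_add_adjacent_intervals (hint r₀ le_rfl)
      ((hint r₀ le_rfl).symm.trans (hint r hr))).symm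
  have hmono : ∫ t in r₀..r, c / C * ((log t - log r₀) ^ n / t) ≤ ∫ t in r₀..r, f t := by
    refine integral_mono_on hr ?_ ((hint r₀ le_rfl).symm.trans (hint r hr)) fun t ht => ?_
    · exact (continuousOn_log_sub_pow_div_self n hr₀ hr).intervalIntegrable.const_mul _
    · have ht₀ : 0 < C * t := mul_pos hC (hr₀.trans_le ht.1)
      calc c / C * ((log t - log r₀) ^ n / t) = c * (log t - log r₀) ^ n / (C * t) := by
            field_simp
        _ ≤ (∫ s in a..t, f s) / (C * t) := by gcongr; exact hlow t ht.1
        _ ≤ f t := by rw [div_le_iff₀ ht₀, mul_comm]; exact hf t ht.1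
  rw [intervalIntegral.integral_const_mul, integral_log_sub_pow_div_self n hr₀ hr] at hmono
  have hcoeff : c / (C * (n + 1)) * (log r - log r₀) ^ (n + 1)
      = c / C * ((log r - log r₀) ^ (n + 1) / (n + 1)) := by field_simp
  linarith

theorem div_pow_mul_factorial_mul_log_sub_pow_le_integral {f : ℝ → ℝ} {a r₀ C b : ℝ}
    (hr₀ : 0 < r₀) (hC : 0 < C) (hb : 0 ≤ b)
    (hint : ∀ r ≥ r₀, IntervalIntegrable f volume a r)
    (hf : ∀ t ≥ r₀, ∫ s in a..t, f s ≤ C * t * f t)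
    (hlow : ∀ t ≥ r₀, b ≤ ∫ s in a..t, f s) (n : ℕ) :
    ∀ r ≥ r₀, b / (C ^ n * n.factorial) * (log r - log r₀) ^ n ≤ ∫ s in a..r, f s := by
  induction n with
  | zero => simpa using hlow
  | succ n ih =>
    intro r hr
    convert mul_log_sub_pow_succ_le_integral hr₀ hC hint hf (hb.trans (hlow r₀ le_rfl)) ih hr
      using 2
    push_cast [Nat.factorial_succ]
    field_simp
    ring

theorem stmt_2_general (V : ℝ → ℝ)
    (b C r₀ : ℝ) (hb : 0 < b) (hC : 0 < C) (hr₀ : 1 ≤ r₀)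
    (h : ∀ r ≥ r₀, b ≤ (∫ s in (1:ℝ)..r, s / V s) ∧
        (∫ s in (1:ℝ)..r, s / V s) ≤ C * r ^ 2 / V r) :
    ∃ C' > (0:ℝ), ∃ r₁ ≥ (1:ℝ), ∀ r ≥ r₁, (Real.log r) ^ 2 ≤ C' * r ^ 2 / V r := by
  have hr₀pos : 0 < r₀ := one_pos.trans_le hr₀
  -- A positive integral is not Mathlib's junk value `0`, so the integrand is integrable.
  have hint : ∀ r ≥ r₀, IntervalIntegrable (fun s => s / V s) volume 1 r := fun r hr => by
    by_contra hni
    linarith [(h r hr).1, integral_undef hni]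
  have hf : ∀ t ≥ r₀, ∫ s in (1:ℝ)..t, s / V s ≤ C * t * (t / V t) := fun t ht =>
    (h t ht).2.trans_eq (by ring)
  refine ⟨8 * C ^ 3 / b, by positivity, r₀ ^ 2, one_le_pow₀ hr₀, fun r hr => ?_⟩
  have hrr₀ : r₀ ≤ r := (le_self_pow₀ hr₀ two_ne_zero).trans hr
  have hquad := div_pow_mul_factorial_mul_log_sub_pow_le_integral hr₀pos hC hb.le hint hf
    (fun t ht => (h t ht).1) 2 r hrr₀
  have hlog : log r ≤ 2 * (log r - log r₀) := by
    have := log_le_log (by positivity) hr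
    rw [log_pow] at this
    push_cast at this
    linarith
  have hlog₀ : 0 ≤ log r := log_nonneg (hr₀.trans hrr₀)
  calc log r ^ 2 ≤ 4 * (log r - log r₀) ^ 2 := by nlinarith
    _ = 8 * C ^ 2 / b * (b / (C ^ 2 * (Nat.factorial 2)) * (log r - log r₀) ^ 2) := by
      simp only [Nat.factorial_two]
      field_simp
      ring
    _ ≤ 8 * C ^ 2 / b * (C * r ^ 2 / V r) := by gcongr; exact hquad.trans (h r hrr₀).2
    _ = 8 * C ^ 3 / b * r ^ 2 / V r := by ring

/-- If `b ≤ ∫₁^r s/V(s) ds ≤ C r²/V(r)` for all large `r`, then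
`(log r)² ≤ C' r²/V(r)` for all large `r`. -/
theorem stmt_2 (V : ℝ → ℝ)
    (hVpos : ∀ r ∈ Set.Ici (1:ℝ), 0 < V r)
    (hVcont : ContinuousOn V (Set.Ici (1:ℝ)))
    (b C r₀ : ℝ) (hb : 0 < b) (hC : 0 < C) (hr₀ : 1 ≤ r₀)
    (h : ∀ r ≥ r₀, b ≤ (∫ s in (1:ℝ)..r, s / V s) ∧
        (∫ s in (1:ℝ)..r, s / V s) ≤ C * r ^ 2 / V r) :
    ∃ C' > (0:ℝ), ∃ r₁ ≥ (1:ℝ), ∀ r ≥ r₁, (Real.log r) ^ 2 ≤ C' * r ^ 2 / V r :=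
  stmt_2_general V b C r₀ hb hC hr₀ h
end

section
/- Let f : (0,∞) → [0,∞) be nonincreasing, let F : (0,∞) → (0,∞) be any function, and suppose there are constants C > 0 and λ₀ > 0 such that ∫₀^∞ e^{−λt} f(t) dt ≤ C / (λ·F(1/√λ)) for every λ ∈ (0, λ₀]. Then f(t) ≤ 2·e·C / F(√t) for every t ≥ 1/λ₀. -/
open MeasureTheory Filter Set

/-! Take `λ = 1/t` and keep only the part `[t/2, t]` of the Laplace integral: there
`e^{-s/t} ≥ e^{-1}` and `f s ≥ f t`, so the integral is at least `e^{-1} f(t) t/2`,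
while the hypothesis bounds it by `C t / F(√t)`. -/

lemma AntitoneOn.mul_le_setLIntegral_Icc {g : ℝ → ENNReal} {a b : ℝ}
    (hg : AntitoneOn g (Icc a b)) (hab : a ≤ b) :
    g b * ENNReal.ofReal (b - a) ≤ ∫⁻ s in Icc a b, g s := by
  calc g b * ENNReal.ofReal (b - a) = ∫⁻ _ in Icc a b, g b := by
        rw [setLIntegral_const, Real.volume_Icc]
    _ ≤ ∫⁻ s in Icc a b, g s :=
        setLIntegral_mono' measurableSet_Icc fun s hs ↦ hg hs (right_mem_Icc.2 hab) hs.2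

section Laplace

variable {f : ℝ → ℝ} {l : ℝ}

lemma AntitoneOn.ofReal_exp_neg_mul_mul (hf : AntitoneOn f (Ioi 0)) (hl : 0 ≤ l) :
    AntitoneOn (fun s ↦ ENNReal.ofReal (Real.exp (-(l * s)) * f s)) (Ioi 0) := by
  intro s hs u hu hsu
  simp only [ENNReal.ofReal_mul (Real.exp_pos _).le]
  gcongr
  exact hf hs hu hsu

lemma ofReal_mul_le_setLIntegral_laplace (hf : AntitoneOn f (Ioi 0)) (hl : 0 ≤ l)
    {a t : ℝ} (ha : 0 < a) (hat : a ≤ t) :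
    ENNReal.ofReal (Real.exp (-(l * t)) * f t) * ENNReal.ofReal (t - a) ≤
      ∫⁻ s in Ioi 0, ENNReal.ofReal (Real.exp (-(l * s)) * f s) := by
  have hsub : Icc a t ⊆ Ioi 0 := (Icc_subset_Ioi_iff hat).2 ha
  exact ((hf.ofReal_exp_neg_mul_mul hl).mono hsub).mul_le_setLIntegral_Icc hat
    |>.trans (lintegral_mono_set hsub)

end Laplace

theorem stmt_5_general (f F : ℝ → ℝ)
    (hfmono : AntitoneOn f (Set.Ioi (0:ℝ)))
    (hF : ∀ x > (0:ℝ), 0 < F x)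
    (C l₀ : ℝ) (hC : 0 < C) (hl₀ : 0 < l₀)
    (h : ∀ l : ℝ, 0 < l → l ≤ l₀ →
      (∫⁻ t in Set.Ioi (0:ℝ), ENNReal.ofReal (Real.exp (-(l * t)) * f t)) ≤
        ENNReal.ofReal (C / (l * F (1 / Real.sqrt l)))) :
    ∀ t ≥ 1 / l₀, f t ≤ 2 * Real.exp 1 * C / F (Real.sqrt t) := by
  intro t ht
  have ht0 : 0 < t := (one_div_pos.2 hl₀).trans_le ht
  have hFt : 0 < F (Real.sqrt t) := hF _ (Real.sqrt_pos.2 ht0)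
  have hupper := h t⁻¹ (inv_pos.2 ht0) (inv_le_of_inv_le₀ hl₀ (by rwa [← one_div]))
  rw [Real.sqrt_inv, one_div, inv_inv] at hupper
  have hlower := ofReal_mul_le_setLIntegral_laplace hfmono (inv_pos.2 ht0).le
    (half_pos ht0) (half_le_self ht0.le)
  rw [inv_mul_cancel₀ ht0.ne', ← ENNReal.ofReal_mul' (by linarith)] at hlower
  have hreal : Real.exp (-1) * f t * (t - t / 2) ≤ C / (t⁻¹ * F (Real.sqrt t)) :=
    (ENNReal.ofReal_le_ofReal_iff (by positivity)).1 (hlower.trans hupper)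
  calc f t = 2 * Real.exp 1 / t * (Real.exp (-1) * f t * (t - t / 2)) := by
        rw [Real.exp_neg]; field_simp; ring
    _ ≤ 2 * Real.exp 1 / t * (C / (t⁻¹ * F (Real.sqrt t))) := by gcongr
    _ = 2 * Real.exp 1 * C / F (Real.sqrt t) := by field_simp

/-- If `f : (0,∞) → [0,∞)` is nonincreasing and its Laplace-type transform
satisfies `∫₀^∞ e^{−λt} f(t) dt ≤ C/(λ F(1/√λ))` for small `λ`, then
`f(t) ≤ 2eC/F(√t)` for `t ≥ 1/λ₀`. -/
theorem stmt_5 (f F : ℝ → ℝ)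
    (hf0 : ∀ t > (0:ℝ), 0 ≤ f t)
    (hfmono : AntitoneOn f (Set.Ioi (0:ℝ)))
    (hF : ∀ x > (0:ℝ), 0 < F x)
    (C l₀ : ℝ) (hC : 0 < C) (hl₀ : 0 < l₀)
    (h : ∀ l : ℝ, 0 < l → l ≤ l₀ →
      (∫⁻ t in Set.Ioi (0:ℝ), ENNReal.ofReal (Real.exp (-(l * t)) * f t)) ≤
        ENNReal.ofReal (C / (l * F (1 / Real.sqrt l)))) :
    ∀ t ≥ 1 / l₀, f t ≤ 2 * Real.exp 1 * C / F (Real.sqrt t) :=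
  stmt_5_general f F hfmono hF C l₀ hC hl₀ h
end

section
/- Let f : (0,∞) → [0,∞) be nonincreasing, and suppose there are constants C > 0 and λ₀ > 0 such that ∫₀^∞ t·e^{−λt} f(t) dt ≤ C/λ for every λ ∈ (0, λ₀]. Then f(t) ≤ (8·e·C/3) / t for every t ≥ 1/λ₀. -/
open MeasureTheory Filter

/-- If `f : (0,∞) → [0,∞)` is nonincreasing and
`∫₀^∞ t e^{−λt} f(t) dt ≤ C/λ` for small `λ`, then
`f(t) ≤ (8eC/3)/t` for `t ≥ 1/λ₀`. -/
theorem stmt_6 (f : ℝ → ℝ)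
    (hf0 : ∀ t > (0:ℝ), 0 ≤ f t)
    (hfmono : AntitoneOn f (Set.Ioi (0:ℝ)))
    (C l₀ : ℝ) (hC : 0 < C) (hl₀ : 0 < l₀)
    (h : ∀ l : ℝ, 0 < l → l ≤ l₀ →
      (∫⁻ t in Set.Ioi (0:ℝ), ENNReal.ofReal (t * Real.exp (-(l * t)) * f t)) ≤
        ENNReal.ofReal (C / l)) :
    ∀ t ≥ 1 / l₀, f t ≤ (8 * Real.exp 1 * C / 3) / t := by
  intro t ht
  have ht0 : 0 < t := lt_of_lt_of_le (by positivity) ht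
  have hft : 0 ≤ f t := hf0 t ht0
  set l : ℝ := 1 / t with hl
  have hl0 : 0 < l := by positivity
  have hll₀ : l ≤ l₀ := by
    rw [hl, div_le_iff₀ ht0]
    calc (1:ℝ) = l₀ * (1 / l₀) := by field_simp
    _ ≤ l₀ * t := by gcongr
  set c : ℝ := Real.exp (-1) * f t with hc
  have hc0 : 0 ≤ c := by positivity
  -- pointwise bound on Ioc (t/2) t
  have hpt : ∀ s ∈ Set.Ioc (t/2) t, c * s ≤ s * Real.exp (-(l * s)) * f s := by
    intro s hs
    have hs0 : 0 < s := lt_trans (by positivity) hs.1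
    have hfs : f t ≤ f s := hfmono hs0 ht0 hs.2
    have hexp : Real.exp (-1) ≤ Real.exp (-(l * s)) := by
      apply Real.exp_le_exp.2
      have : l * s ≤ 1 := by
        rw [hl]; rw [div_mul_eq_mul_div, div_le_one ht0, one_mul]; exact hs.2
      linarith
    calc c * s = s * Real.exp (-1) * f t := by ring
    _ ≤ s * Real.exp (-(l * s)) * f t := by gcongr
    _ ≤ s * Real.exp (-(l * s)) * f s := by
        apply mul_le_mul_of_nonneg_left hfs; positivity
  -- compute lintegral of c*s on Ioc (t/2) t
  have hint : IntegrableOn (fun s => c * s) (Set.Ioc (t/2) t) volume :=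
    (continuous_const.mul continuous_id).integrableOn_Ioc
  have heq : ∫⁻ s in Set.Ioc (t/2) t, ENNReal.ofReal (c * s) =
      ENNReal.ofReal (c * (3/8 * t^2)) := by
    rw [← ofReal_integral_eq_lintegral_ofReal hint]
    · congr 1
      rw [← intervalIntegral.integral_of_le (by linarith : t/2 ≤ t),
        intervalIntegral.integral_const_mul, integral_id]
      ring
    · filter_upwards [self_mem_ae_restrict measurableSet_Ioc] with s hs
      have hs0 : 0 < s := lt_trans (by positivity) hs.1
      positivity
  have hchain : ENNReal.ofReal (c * (3/8 * t^2)) ≤ ENNReal.ofReal (C * t) := by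
    rw [← heq]
    calc ∫⁻ s in Set.Ioc (t/2) t, ENNReal.ofReal (c * s)
        ≤ ∫⁻ s in Set.Ioc (t/2) t, ENNReal.ofReal (s * Real.exp (-(l * s)) * f s) := by
          apply setLIntegral_mono' measurableSet_Ioc
          intro s hs; exact ENNReal.ofReal_le_ofReal (hpt s hs)
      _ ≤ ∫⁻ s in Set.Ioi (0:ℝ), ENNReal.ofReal (s * Real.exp (-(l * s)) * f s) := by
          apply lintegral_mono_set
          intro s hs; exact lt_trans (by positivity) hs.1
      _ ≤ ENNReal.ofReal (C / l) := h l hl0 hll₀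
      _ = ENNReal.ofReal (C * t) := by rw [hl]; congr 1; field_simp
  have hreal : c * (3/8 * t^2) ≤ C * t :=
    (ENNReal.ofReal_le_ofReal_iff (by positivity)).1 hchain
  have he : 0 < Real.exp 1 := Real.exp_pos 1
  rw [le_div_iff₀ ht0]
  rw [hc] at hreal
  have h3 : Real.exp 1 * Real.exp (-1) = 1 := by
    rw [← Real.exp_add]; norm_num
  have h4 := mul_le_mul_of_nonneg_left hreal he.le
  have h5 : Real.exp 1 * (Real.exp (-1) * f t * (3/8 * t^2)) = f t * (3/8 * t^2) := by
    linear_combination (f t * (3/8 * t^2)) * h3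
  have h2 : f t * (3/8 * t^2) ≤ Real.exp 1 * (C * t) := by
    calc f t * (3/8 * t^2) = Real.exp 1 * (Real.exp (-1) * f t * (3/8 * t^2)) := h5.symm
    _ ≤ Real.exp 1 * (C * t) := h4
  nlinarith [h2, ht0, mul_pos ht0 ht0]
end

section
/- Let (M, d) be a metric space, K ⊆ M a nonempty bounded set, and for x ∈ M set |x| := d(x, K) + e, where d(x,K) = inf_{z∈K} d(x,z) and e = exp(1). Then for every b > 0 there exist constants C ≥ 1 and b' > 0 such that for all x, y ∈ M and all t > 0 with min(|x|, |y|) ≤ √t, both inequalities hold: exp(−b·(|x|² + |y|²)/t) ≤ C·exp(−b'·d(x,y)²/t) and exp(−b·d(x,y)²/t) ≤ C·exp(−b'·(|x|² + |y|²)/t). -/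
open MeasureTheory Filter

lemma dist_le_infDist_add_infDist_add_diam' {M : Type*} [MetricSpace M] {K : Set M}
    (hK : K.Nonempty) (hKb : Bornology.IsBounded K) (x y : M) :
    dist x y ≤ Metric.infDist x K + Metric.infDist y K + Metric.diam K := by
  refine le_of_forall_pos_le_add fun ε hε => ?_
  obtain ⟨k, hk, hxk⟩ := (Metric.infDist_lt_iff hK).mp
    (lt_add_of_pos_right _ (half_pos hε) : Metric.infDist x K < Metric.infDist x K + ε/2)
  obtain ⟨k', hk', hyk⟩ := (Metric.infDist_lt_iff hK).mp
    (lt_add_of_pos_right _ (half_pos hε) : Metric.infDist y K < Metric.infDist y K + ε/2)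
  have h1 : dist x y ≤ dist x k + dist k k' + dist k' y := dist_triangle4 x k k' y
  have h2 : dist k k' ≤ Metric.diam K := Metric.dist_le_diam_of_mem hKb hk hk'
  have h3 : dist k' y = dist y k' := dist_comm _ _
  linarith

lemma stmt_9_core {M : Type*} [MetricSpace M] (K : Set M)
    (hK : K.Nonempty) (hKb : Bornology.IsBounded K)
    (b : ℝ) (hb : 0 < b) (x y : M) (t : ℝ) (ht : 0 < t)
    (hx : Metric.infDist x K + Real.exp 1 ≤ Real.sqrt t) :
    (Real.exp (-(b * (((Metric.infDist x K + Real.exp 1) ^ 2 +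
          (Metric.infDist y K + Real.exp 1) ^ 2) / t))) ≤
        Real.exp (b * Metric.diam K ^ 2 + b) *
          Real.exp (-(b / 3 * (dist x y ^ 2 / t))) ∧
      Real.exp (-(b * (dist x y ^ 2 / t))) ≤
        Real.exp (b * Metric.diam K ^ 2 + b) *
          Real.exp (-(b / 3 * (((Metric.infDist x K + Real.exp 1) ^ 2 +
            (Metric.infDist y K + Real.exp 1) ^ 2) / t)))) := by
  have he1 : (1:ℝ) ≤ Real.exp 1 := Real.one_le_exp zero_le_one
  have htri0 := dist_le_infDist_add_infDist_add_diam' hK hKb x y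
  have htri20 : Metric.infDist y K ≤ Metric.infDist x K + dist y x :=
    Metric.infDist_le_infDist_add_dist
  rw [dist_comm y x] at htri20
  have hdx : 0 ≤ Metric.infDist x K := Metric.infDist_nonneg
  have hdy : 0 ≤ Metric.infDist y K := Metric.infDist_nonneg
  set e := Real.exp 1 with he
  set X := Metric.infDist x K + e with hXd
  set Y := Metric.infDist y K + e with hYd
  set D := dist x y with hDd
  set δ := Metric.diam K with hδd
  have hD0 : 0 ≤ D := dist_nonneg
  have hδ0 : 0 ≤ δ := Metric.diam_nonneg
  have hXe : e ≤ X := by rw [hXd]; linarith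
  have hYe : e ≤ Y := by rw [hYd]; linarith
  have htri : D ≤ X + Y + δ := by rw [hXd, hYd]; linarith
  have htri2 : Y ≤ X + D := by rw [hXd, hYd]; linarith
  clear_value e X Y D δ
  clear htri0 htri20 hdx hdy hXd hYd hDd hδd he
  have hX0 : 0 < X := lt_of_lt_of_le (lt_of_lt_of_le one_pos he1) hXe
  have hY0 : 0 < Y := lt_of_lt_of_le (lt_of_lt_of_le one_pos he1) hYe
  have hsq : (1:ℝ) ≤ Real.sqrt t := le_trans he1 (le_trans hXe hx)
  have ht1 : (1:ℝ) ≤ t := by nlinarith [Real.sq_sqrt ht.le]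
  have hXt : X ^ 2 ≤ t := by
    nlinarith [Real.sq_sqrt ht.le, le_trans hXe hx, hX0.le, Real.sqrt_nonneg t]
  have h4 : 0 ≤ D ^ 2 / t := by positivity
  have hA : 0 ≤ (X ^ 2 + Y ^ 2) / t := by positivity
  constructor
  · rw [← Real.exp_add, Real.exp_le_exp]
    have hDsq : D ^ 2 ≤ 3 * X ^ 2 + 3 * Y ^ 2 + 3 * δ ^ 2 := by
      nlinarith [mul_le_mul htri htri hD0 (by positivity : (0:ℝ) ≤ X + Y + δ),
        sq_nonneg (X - Y), sq_nonneg (X - δ), sq_nonneg (Y - δ)]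
    have h1 : D ^ 2 / t ≤ (3 * X ^ 2 + 3 * Y ^ 2 + 3 * δ ^ 2) / t := by gcongr
    have h2 : (3 * X ^ 2 + 3 * Y ^ 2 + 3 * δ ^ 2) / t
        = 3 * ((X ^ 2 + Y ^ 2) / t) + 3 * (δ ^ 2 / t) := by ring
    rw [h2] at h1
    have h3 : δ ^ 2 / t ≤ δ ^ 2 := div_le_self (sq_nonneg δ) ht1
    have hp1 : b / 3 * (D ^ 2 / t) ≤
        b / 3 * (3 * ((X ^ 2 + Y ^ 2) / t) + 3 * (δ ^ 2 / t)) :=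
      mul_le_mul_of_nonneg_left h1 (by positivity)
    have hp2 : b * (δ ^ 2 / t) ≤ b * δ ^ 2 := mul_le_mul_of_nonneg_left h3 hb.le
    linarith [hp1, hp2]
  · rw [← Real.exp_add, Real.exp_le_exp]
    have hYsq : Y ^ 2 ≤ 2 * X ^ 2 + 2 * D ^ 2 := by
      nlinarith [mul_le_mul htri2 htri2 hY0.le (by positivity : (0:ℝ) ≤ X + D),
        sq_nonneg (X - D)]
    have hsum : X ^ 2 + Y ^ 2 ≤ 3 * t + 2 * D ^ 2 := by nlinarith
    have h1 : (X ^ 2 + Y ^ 2) / t ≤ (3 * t + 2 * D ^ 2) / t := by gcongr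
    have h2 : (3 * t + 2 * D ^ 2) / t = 3 + 2 * (D ^ 2 / t) := by
      field_simp
    rw [h2] at h1
    have hp1 : b / 3 * ((X ^ 2 + Y ^ 2) / t) ≤ b / 3 * (3 + 2 * (D ^ 2 / t)) :=
      mul_le_mul_of_nonneg_left h1 (by positivity)
    have hp2 : b / 3 * (2 * (D ^ 2 / t)) ≤ b * (D ^ 2 / t) := by nlinarith
    have hδb : 0 ≤ b * δ ^ 2 := by positivity
    linarith [hp1, hp2]

/-- On a metric space with a nonempty bounded set `K`, setting
`|x| = d(x,K) + e`, for every `b > 0` there are `C ≥ 1` and `b' > 0`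
such that whenever `min(|x|,|y|) ≤ √t`, the Gaussian factors
`exp(−b(|x|²+|y|²)/t)` and `exp(−b' d(x,y)²/t)` are comparable. -/
theorem stmt_9 {M : Type*} [MetricSpace M] (K : Set M)
    (hK : K.Nonempty) (hKb : Bornology.IsBounded K)
    (b : ℝ) (hb : 0 < b) :
    ∃ C ≥ (1:ℝ), ∃ b' > (0:ℝ), ∀ x y : M, ∀ t > (0:ℝ),
      min (Metric.infDist x K + Real.exp 1) (Metric.infDist y K + Real.exp 1) ≤ Real.sqrt t →
      (Real.exp (-(b * (((Metric.infDist x K + Real.exp 1) ^ 2 +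
            (Metric.infDist y K + Real.exp 1) ^ 2) / t))) ≤
          C * Real.exp (-(b' * (dist x y ^ 2 / t))) ∧
        Real.exp (-(b * (dist x y ^ 2 / t))) ≤
          C * Real.exp (-(b' * (((Metric.infDist x K + Real.exp 1) ^ 2 +
            (Metric.infDist y K + Real.exp 1) ^ 2) / t)))) := by
  refine ⟨Real.exp (b * Metric.diam K ^ 2 + b), ?_, b / 3, by positivity,
    fun x y t ht hmin => ?_⟩
  · apply Real.one_le_exp
    positivity
  · rcases min_le_iff.mp hmin with h | h
    · exact stmt_9_core K hK hKb b hb x y t ht h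
    · have := stmt_9_core K hK hKb b hb y x t ht h
      rw [dist_comm y x, add_comm ((Metric.infDist y K + Real.exp 1) ^ 2)] at this
      exact this
end

section
/- Let V : [1,∞) → (0,∞) be continuous and nondecreasing, and suppose there are constants b > 0, C > 0 and r₀ ≥ 1 such that b ≤ ∫₁^r s/V(s) ds ≤ C·r²/V(r) for all r ≥ r₀. Define H(r) := 1 + ∫₁^r s/V(s) ds. Then there exist λ₀ ∈ (0,1) and C' > 0 such that for every λ ∈ (0, λ₀], setting T := 1/(λ·(log(1/λ))²), one has ∫_T^∞ e^{−λt}/H(√t) dt ≤ C'·T. -/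
/-!
Write `G(r) = ∫₁^r s/V(s) ds`. Since `G' = r/V(r)`, the upper bound `G ≤ C r²/V(r)` is the
differential inequality `G' ≥ G/(C r)`. Integrating it from `G ≥ b` gives
`G(r) ≥ (b/C) log(r/r₀)`, and feeding this back in gives `G(r) ≥ (b/2C²) log²(r/r₀)`.
With `L = log(1/λ)` and `T = 1/(λL²)`, for small `λ` one has `log(√T/r₀) ≥ L/8`, so
`H(√T) ≳ L²`; as `H` is nondecreasing, the tail integral is at most
`1/(λ H(√T)) ≲ 1/(λL²) = T`.
-/

open MeasureTheory Filter Real Set Topology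

section IntegralIdDiv

variable {V : ℝ → ℝ}

theorem intervalIntegrable_id_div (hVpos : ∀ r ∈ Ici (1:ℝ), 0 < V r)
    (hVcont : ContinuousOn V (Ici 1)) ⦃a c : ℝ⦄ (ha : 1 ≤ a) (hac : a ≤ c) :
    IntervalIntegrable (fun s => s / V s) volume a c := by
  have hsub : uIcc a c ⊆ Ici 1 := by
    rw [uIcc_of_le hac]
    exact fun x hx => ha.trans hx.1
  apply ContinuousOn.intervalIntegrable
  exact continuousOn_id.div (hVcont.mono hsub) fun x hx => (hVpos x (hsub hx)).ne'

theorem monotoneOn_integral_id_div (hVpos : ∀ r ∈ Ici (1:ℝ), 0 < V r)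
    (hVcont : ContinuousOn V (Ici 1)) :
    MonotoneOn (fun r => ∫ s in (1:ℝ)..r, s / V s) (Ici 1) := by
  intro a ha c _ hac
  have hint := intervalIntegrable_id_div hVpos hVcont
  have hnonneg : 0 ≤ ∫ s in a..c, s / V s :=
    intervalIntegral.integral_nonneg hac fun s hs =>
      have h1s : (1:ℝ) ≤ s := ha.trans hs.1
      div_nonneg (zero_le_one.trans h1s) (hVpos s h1s).le
  dsimp only
  linarith [intervalIntegral.integral_add_adjacent_intervals (hint le_rfl ha) (hint ha hac)]

theorem le_integral_id_div_of_hasDerivAt_le (hVpos : ∀ r ∈ Ici (1:ℝ), 0 < V r)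
    (hVcont : ContinuousOn V (Ici 1)) {F F' : ℝ → ℝ} {r₀ r : ℝ} (hr₀ : 1 ≤ r₀)
    (hF : ∀ s ≥ r₀, HasDerivAt F (F' s) s) (hF' : ∀ s ≥ r₀, F' s ≤ s / V s)
    (hF₀ : F r₀ ≤ ∫ s in (1:ℝ)..r₀, s / V s) (hr : r₀ ≤ r) :
    F r ≤ ∫ s in (1:ℝ)..r, s / V s := by
  have hint := intervalIntegrable_id_div hVpos hVcont
  have hgrowth := intervalIntegral.sub_le_integral_of_hasDeriv_right_of_le hr
    (fun s hs => (hF s hs.1).continuousAt.continuousWithinAt)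
    (fun s hs => (hF s hs.1.le).hasDerivWithinAt)
    ((intervalIntegrable_iff_integrableOn_Icc_of_le hr).mp (hint hr₀ hr))
    (fun s hs => hF' s hs.1.le)
  linarith [intervalIntegral.integral_add_adjacent_intervals (hint le_rfl hr₀) (hint hr₀ hr)]

variable {C r₀ : ℝ}

theorem integral_id_div_div_le (hC : 0 < C) (hr₀ : 1 ≤ r₀)
    (hup : ∀ r ≥ r₀, (∫ s in (1:ℝ)..r, s / V s) ≤ C * r ^ 2 / V r) {s : ℝ} (hs : r₀ ≤ s) :
    (∫ u in (1:ℝ)..s, u / V u) / (C * s) ≤ s / V s := by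
  have hs0 : 0 < s := by linarith
  calc (∫ u in (1:ℝ)..s, u / V u) / (C * s) ≤ C * s ^ 2 / V s / (C * s) :=
        div_le_div_of_nonneg_right (hup s hs) (by positivity)
    _ = s / V s := by field_simp

variable {b : ℝ}

theorem log_le_integral_id_div (hVpos : ∀ r ∈ Ici (1:ℝ), 0 < V r)
    (hVcont : ContinuousOn V (Ici 1)) (hb : 0 < b) (hC : 0 < C) (hr₀ : 1 ≤ r₀)
    (h : ∀ r ≥ r₀, b ≤ (∫ s in (1:ℝ)..r, s / V s) ∧
        (∫ s in (1:ℝ)..r, s / V s) ≤ C * r ^ 2 / V r) {r : ℝ} (hr : r₀ ≤ r) :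
    b / C * (log r - log r₀) ≤ ∫ s in (1:ℝ)..r, s / V s := by
  refine le_integral_id_div_of_hasDerivAt_le hVpos hVcont hr₀
    (F := fun s => b / C * (log s - log r₀)) (F' := fun s => b / (C * s))
    (fun s hs => ?_) (fun s hs => ?_) (by simpa using (h r₀ le_rfl).1.trans' hb.le) hr
  · have hs0 : s ≠ 0 := by linarith
    exact (((hasDerivAt_log hs0).sub_const _).const_mul _).congr_deriv (by field_simp)
  · have hs0 : 0 < s := by linarith
    exact (div_le_div_of_nonneg_right (h s hs).1 (by positivity)).trans
      (integral_id_div_div_le hC hr₀ (fun r hr => (h r hr).2) hs)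

theorem log_sq_le_integral_id_div (hVpos : ∀ r ∈ Ici (1:ℝ), 0 < V r)
    (hVcont : ContinuousOn V (Ici 1)) (hb : 0 < b) (hC : 0 < C) (hr₀ : 1 ≤ r₀)
    (h : ∀ r ≥ r₀, b ≤ (∫ s in (1:ℝ)..r, s / V s) ∧
        (∫ s in (1:ℝ)..r, s / V s) ≤ C * r ^ 2 / V r) {r : ℝ} (hr : r₀ ≤ r) :
    b / (2 * C ^ 2) * (log r - log r₀) ^ 2 ≤ ∫ s in (1:ℝ)..r, s / V s := by
  refine le_integral_id_div_of_hasDerivAt_le hVpos hVcont hr₀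
    (F := fun s => b / (2 * C ^ 2) * (log s - log r₀) ^ 2)
    (F' := fun s => b / C * (log s - log r₀) / (C * s))
    (fun s hs => ?_) (fun s hs => ?_) (by simpa using (h r₀ le_rfl).1.trans' hb.le) hr
  · have hs0 : s ≠ 0 := by linarith
    exact ((((hasDerivAt_log hs0).sub_const (log r₀)).pow 2).const_mul _).congr_deriv
      (by field_simp; ring)
  · have hs0 : 0 < s := by linarith
    exact (div_le_div_of_nonneg_right (log_le_integral_id_div hVpos hVcont hb hC hr₀ h hs)
      (by positivity)).trans (integral_id_div_div_le hC hr₀ (fun r hr => (h r hr).2) hs)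

end IntegralIdDiv

theorem setIntegral_Ici_exp_neg_mul_div_le {f : ℝ → ℝ} {l T H₀ : ℝ} (hl : 0 < l) (hT : 0 ≤ T)
    (hH₀ : 0 < H₀) (hf : ∀ t ≥ T, H₀ ≤ f t) :
    ∫ t in Ici T, exp (-(l * t)) / f t ≤ (l * H₀)⁻¹ := by
  have hexp : IntegrableOn (fun t => exp (-l * t)) (Ici T) :=
    (integrableOn_Ici_iff_integrableOn_Ioi (by simp)).2
      (integrableOn_exp_mul_Ioi (neg_lt_zero.mpr hl) T)
  simp only [← neg_mul]
  calc ∫ t in Ici T, exp (-l * t) / f t ≤ ∫ t in Ici T, exp (-l * t) / H₀ := by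
        refine integral_mono_of_nonneg ?_ (hexp.div_const H₀) ?_ <;>
          filter_upwards [ae_restrict_mem measurableSet_Ici] with t ht
        · exact div_nonneg (exp_pos _).le (hH₀.trans_le (hf t ht)).le
        · exact div_le_div_of_nonneg_left (exp_pos _).le hH₀ (hf t ht)
    _ = exp (-l * T) / l / H₀ := by
        rw [integral_div, integral_Ici_eq_integral_Ioi, integral_exp_mul_Ioi (neg_lt_zero.mpr hl),
          neg_div_neg_eq]
    _ ≤ (l * H₀)⁻¹ := by
        rw [div_div, ← one_div]
        gcongr
        exact exp_le_one_iff.mpr (by nlinarith)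

theorem tendsto_log_one_div_nhdsGT_zero : Tendsto (fun l => log (1 / l)) (𝓝[>] 0) atTop :=
  (tendsto_neg_atBot_atTop.comp tendsto_log_nhdsGT_zero).congr fun l => by simp

theorem setIntegral_Ici_exp_neg_mul_div_one_add_integral_id_div_le {V : ℝ → ℝ}
    (hVpos : ∀ r ∈ Ici (1:ℝ), 0 < V r) (hVcont : ContinuousOn V (Ici 1)) {b C r₀ : ℝ}
    (hb : 0 < b) (hC : 0 < C) (hr₀ : 1 ≤ r₀)
    (h : ∀ r ≥ r₀, b ≤ (∫ s in (1:ℝ)..r, s / V s) ∧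
        (∫ s in (1:ℝ)..r, s / V s) ≤ C * r ^ 2 / V r)
    {l T x : ℝ} (hl : 0 < l) (hx : 0 < x) (hxT : x ≤ log √T - log r₀) :
    ∫ t in Ici T, exp (-(l * t)) / (1 + ∫ s in (1:ℝ)..√t, s / V s) ≤
      2 * C ^ 2 / (b * l * x ^ 2) := by
  have hlogr₀ := log_nonneg hr₀
  have hT : 0 < T := by
    by_contra! hT
    rw [sqrt_eq_zero'.mpr hT, log_zero] at hxT
    linarith
  have hr₀T : r₀ ≤ √T := (log_le_log_iff (by linarith) (sqrt_pos.mpr hT)).mp (by linarith)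
  have hH₀ : b / (2 * C ^ 2) * x ^ 2 ≤ 1 + ∫ s in (1:ℝ)..√T, s / V s := by
    have hlow := log_sq_le_integral_id_div hVpos hVcont hb hC hr₀ h hr₀T
    have : x ^ 2 ≤ (log √T - log r₀) ^ 2 := pow_le_pow_left₀ hx.le hxT 2
    nlinarith [div_pos hb (by positivity : (0:ℝ) < 2 * C ^ 2)]
  have hmono : ∀ t ≥ T, b / (2 * C ^ 2) * x ^ 2 ≤ 1 + ∫ s in (1:ℝ)..√t, s / V s := fun t ht =>
    hH₀.trans <| add_le_add_right (monotoneOn_integral_id_div hVpos hVcont (hr₀.trans hr₀T)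
      (hr₀.trans (hr₀T.trans (sqrt_le_sqrt ht))) (sqrt_le_sqrt ht)) 1
  calc _ ≤ (l * (b / (2 * C ^ 2) * x ^ 2))⁻¹ :=
        setIntegral_Ici_exp_neg_mul_div_le hl hT.le (by positivity) hmono
    _ = 2 * C ^ 2 / (b * l * x ^ 2) := by field_simp

theorem eventually_log_one_div_nhdsGT_zero (c : ℝ) :
    ∀ᶠ l in 𝓝[>] 0, 0 < log (1 / l) ∧ c ≤ log (1 / l) ∧ log (log (1 / l)) ≤ log (1 / l) / 4 := by
  refine tendsto_log_one_div_nhdsGT_zero.eventually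
    (p := fun L => 0 < L ∧ c ≤ L ∧ log L ≤ L / 4) ?_
  filter_upwards [eventually_gt_atTop 0, eventually_ge_atTop c,
    isLittleO_log_id_atTop.bound (by norm_num : (0:ℝ) < 1 / 4)] with L hL hcL hlogL
  refine ⟨hL, hcL, ?_⟩
  rw [norm_eq_abs, norm_eq_abs, id, abs_of_pos hL] at hlogL
  linarith [le_abs_self (log L)]

theorem stmt_13_general (V : ℝ → ℝ)
    (hVpos : ∀ r ∈ Set.Ici (1:ℝ), 0 < V r)
    (hVcont : ContinuousOn V (Set.Ici (1:ℝ)))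
    (b C r₀ : ℝ) (hb : 0 < b) (hC : 0 < C) (hr₀ : 1 ≤ r₀)
    (h : ∀ r ≥ r₀, b ≤ (∫ s in (1:ℝ)..r, s / V s) ∧
        (∫ s in (1:ℝ)..r, s / V s) ≤ C * r ^ 2 / V r) :
    ∃ l₀ ∈ Set.Ioo (0:ℝ) 1, ∃ C' > (0:ℝ), ∀ l ∈ Set.Ioc (0:ℝ) l₀,
      (∫ t in Set.Ici (1 / (l * (Real.log (1 / l)) ^ 2)),
        Real.exp (-(l * t)) / (1 + ∫ s in (1:ℝ)..Real.sqrt t, s / V s)) ≤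
        C' * (1 / (l * (Real.log (1 / l)) ^ 2)) := by
  obtain ⟨u, hu, hsub⟩ :=
    mem_nhdsGT_iff_exists_Ioc_subset.mp (eventually_log_one_div_nhdsGT_zero (8 * log r₀))
  refine ⟨min u (1 / 2), ⟨lt_min hu (by norm_num), (min_le_right _ _).trans_lt (by norm_num)⟩,
    128 * C ^ 2 / b, by positivity, fun l ⟨hl, hlu⟩ => ?_⟩
  obtain ⟨hL, hr₀L, hlogL⟩ := hsub ⟨hl, hlu.trans (min_le_left _ _)⟩
  set L := log (1 / l)
  -- `T = 1/(λL²)` has `log √T = (L - 2 log L)/2 ≥ L/4`, while `log r₀ ≤ L/8`.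
  have hlogT : log √(1 / (l * L ^ 2)) = (L - 2 * log L) / 2 := by
    rw [log_sqrt (by positivity), one_div, log_inv, log_mul hl.ne' (by positivity), log_pow]
    simp only [L, one_div, log_inv]
    ring
  calc _ ≤ 2 * C ^ 2 / (b * l * (L / 8) ^ 2) :=
        setIntegral_Ici_exp_neg_mul_div_one_add_integral_id_div_le hVpos hVcont hb hC hr₀ h hl
          (by positivity) (by rw [hlogT]; linarith)
    _ = 128 * C ^ 2 / b * (1 / (l * L ^ 2)) := by field_simp; ring

/-- For a continuous nondecreasing positive `V` on `[1,∞)` with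
`b ≤ ∫₁^r s/V(s) ds ≤ C r²/V(r)` for `r ≥ r₀`, and `H(r) = 1 + ∫₁^r s/V(s) ds`,
there are `λ₀ ∈ (0,1)` and `C' > 0` such that for `λ ∈ (0,λ₀]`, with
`T = 1/(λ (log(1/λ))²)`, one has `∫_T^∞ e^{−λt}/H(√t) dt ≤ C' T`. -/
theorem stmt_13 (V : ℝ → ℝ)
    (hVpos : ∀ r ∈ Set.Ici (1:ℝ), 0 < V r)
    (hVcont : ContinuousOn V (Set.Ici (1:ℝ)))
    (hVmono : MonotoneOn V (Set.Ici (1:ℝ)))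
    (b C r₀ : ℝ) (hb : 0 < b) (hC : 0 < C) (hr₀ : 1 ≤ r₀)
    (h : ∀ r ≥ r₀, b ≤ (∫ s in (1:ℝ)..r, s / V s) ∧
        (∫ s in (1:ℝ)..r, s / V s) ≤ C * r ^ 2 / V r) :
    ∃ l₀ ∈ Set.Ioo (0:ℝ) 1, ∃ C' > (0:ℝ), ∀ l ∈ Set.Ioc (0:ℝ) l₀,
      (∫ t in Set.Ici (1 / (l * (Real.log (1 / l)) ^ 2)),
        Real.exp (-(l * t)) / (1 + ∫ s in (1:ℝ)..Real.sqrt t, s / V s)) ≤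
        C' * (1 / (l * (Real.log (1 / l)) ^ 2)) :=
  stmt_13_general V hVpos hVcont b C r₀ hb hC hr₀ h
end

section
/- Let (M, d) be a metric space equipped with a Borel measure μ that is doubling: there is C_D ≥ 1 such that 0 < μ(B(x, 2r)) ≤ C_D·μ(B(x, r)) < ∞ for all x ∈ M and r > 0, where B(x,r) is the closed ball of radius r about x. Fix o ∈ M. Then for every b > 0 there exist constants C ≥ 1 and b' > 0 such that for all x, y ∈ M and all t > 0: (1/μ(B(o,√t)))·exp(−b·(d(o,x)² + d(o,y)²)/t) ≤ (C/μ(B(x,√t)))·exp(−b'·d(x,y)²/t). -/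
/-!
Since `B(x, √t) ⊆ B(o, 2ᵏ √t)` with `k = ⌈d(o,x)/√t⌉`, iterating the doubling inequality
gives `μ(B(x,√t)) ≤ C_D^(1 + d(o,x)/√t) μ(B(o,√t))`. Writing `a = log C_D` and
`s = d(o,x)/√t`, the factor `C_D^s = exp(a s)` is absorbed by half of the Gaussian,
`a s - (b/2) s² ≤ a²/(2b)`. The other half controls `d(x,y)²/t`, because
`d(x,y)² ≤ 2 (d(o,x)² + d(o,y)²)`.
-/

open MeasureTheory Metric

section Doubling

variable {M : Type*} [MetricSpace M] [MeasurableSpace M] {μ : Measure M}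

theorem measure_closedBall_two_pow_mul_le {x : M} {c : ENNReal}
    (hdoub : ∀ r : ℝ, 0 < r → μ (closedBall x (2 * r)) ≤ c * μ (closedBall x r))
    {r : ℝ} (hr : 0 < r) (k : ℕ) :
    μ (closedBall x (2 ^ k * r)) ≤ c ^ k * μ (closedBall x r) := by
  induction k with
  | zero => simp
  | succ k ih =>
    calc μ (closedBall x (2 ^ (k + 1) * r))
        = μ (closedBall x (2 * (2 ^ k * r))) := by rw [pow_succ', mul_assoc]
      _ ≤ c * μ (closedBall x (2 ^ k * r)) := hdoub _ (by positivity)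
      _ ≤ c * (c ^ k * μ (closedBall x r)) := by gcongr
      _ = c ^ (k + 1) * μ (closedBall x r) := by rw [pow_succ', mul_assoc]

theorem measure_closedBall_le_rpow_mul {o : M} {C_D : ℝ} (hCD : 1 ≤ C_D)
    (hdoub : ∀ r : ℝ, 0 < r →
      μ (closedBall o (2 * r)) ≤ ENNReal.ofReal C_D * μ (closedBall o r))
    (x : M) {r : ℝ} (hr : 0 < r) :
    μ (closedBall x r) ≤ ENNReal.ofReal (C_D ^ (1 + dist o x / r)) * μ (closedBall o r) := by
  set k := ⌈dist o x / r⌉₊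
  have hk : dist o x / r ≤ k := Nat.le_ceil _
  have hsub : closedBall x r ⊆ closedBall o (2 ^ k * r) := by
    refine closedBall_subset_closedBall' ?_
    have h2k : 1 + (k : ℝ) ≤ 2 ^ k := by
      simpa [one_add_one_eq_two] using one_add_mul_le_pow (a := (1 : ℝ)) (by norm_num) k
    calc r + dist x o = (1 + dist o x / r) * r := by field_simp; rw [dist_comm]
      _ ≤ 2 ^ k * r := by gcongr; linarith
  have hpow : C_D ^ k ≤ C_D ^ (1 + dist o x / r) := by
    rw [← Real.rpow_natCast]
    exact Real.rpow_le_rpow_of_exponent_le hCD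
      (by linarith [Nat.ceil_lt_add_one (div_nonneg dist_nonneg hr.le : 0 ≤ dist o x / r)])
  calc μ (closedBall x r) ≤ μ (closedBall o (2 ^ k * r)) := measure_mono hsub
    _ ≤ ENNReal.ofReal C_D ^ k * μ (closedBall o r) :=
      measure_closedBall_two_pow_mul_le hdoub hr k
    _ ≤ ENNReal.ofReal (C_D ^ (1 + dist o x / r)) * μ (closedBall o r) := by
      rw [← ENNReal.ofReal_pow (by linarith)]
      gcongr

theorem toReal_measure_closedBall_le_rpow_mul {o : M} {C_D : ℝ} (hCD : 1 ≤ C_D)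
    (hdoub : ∀ r : ℝ, 0 < r →
      μ (closedBall o (2 * r)) ≤ ENNReal.ofReal C_D * μ (closedBall o r))
    {r : ℝ} (hfin : μ (closedBall o r) ≠ ⊤) (x : M) (hr : 0 < r) :
    (μ (closedBall x r)).toReal ≤ C_D ^ (1 + dist o x / r) * (μ (closedBall o r)).toReal := by
  have := ENNReal.toReal_mono (ENNReal.mul_ne_top ENNReal.ofReal_ne_top hfin)
    (measure_closedBall_le_rpow_mul hCD hdoub x hr)
  rwa [ENNReal.toReal_mul, ENNReal.toReal_ofReal (by positivity)] at this

end Doubling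

theorem mul_sub_half_mul_sq_le (a s : ℝ) {b : ℝ} (hb : 0 < b) :
    a * s - b / 2 * s ^ 2 ≤ a ^ 2 / (2 * b) := by
  have : 0 ≤ (b * s - a) ^ 2 / (2 * b) := by positivity
  have h : (b * s - a) ^ 2 / (2 * b) = b / 2 * s ^ 2 - a * s + a ^ 2 / (2 * b) := by
    field_simp; ring
  linarith

theorem gaussian_exponent_le (a : ℝ) {b t u v w : ℝ} (hb : 0 < b) (ht : 0 < t)
    (hw₀ : 0 ≤ w) (hw : w ≤ u + v) :
    a * (1 + u / √t) - b * ((u ^ 2 + v ^ 2) / t) ≤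
      a + a ^ 2 / (2 * b) - b / 4 * (w ^ 2 / t) := by
  have hs : (u / √t) ^ 2 = u ^ 2 / t := by rw [div_pow, Real.sq_sqrt ht.le]
  have hw2 : w ^ 2 / t ≤ 2 * (u ^ 2 + v ^ 2) / t := by
    gcongr
    exact (pow_le_pow_left₀ hw₀ hw 2).trans add_sq_le
  have hlin := mul_sub_half_mul_sq_le a (u / √t) hb
  rw [hs] at hlin
  have hquad : b / 4 * (w ^ 2 / t) ≤ b / 2 * ((u ^ 2 + v ^ 2) / t) :=
    calc b / 4 * (w ^ 2 / t) ≤ b / 4 * (2 * (u ^ 2 + v ^ 2) / t) := by gcongr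
      _ = b / 2 * ((u ^ 2 + v ^ 2) / t) := by ring
  have hv : 0 ≤ b / 2 * (v ^ 2 / t) := by positivity
  rw [add_div] at hquad ⊢
  linarith

theorem stmt_17_general {M : Type*} [MetricSpace M] [MeasurableSpace M]
    (μ : Measure M) (C_D : ℝ) (hCD : 1 ≤ C_D)
    (hpos : ∀ (x : M) (r : ℝ), 0 < r → 0 < μ (Metric.closedBall x r))
    (hfin : ∀ (x : M) (r : ℝ), 0 < r → μ (Metric.closedBall x r) < ⊤)
    (hdoub : ∀ (x : M) (r : ℝ), 0 < r →
      μ (Metric.closedBall x (2 * r)) ≤ ENNReal.ofReal C_D * μ (Metric.closedBall x r))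
    (o : M) (b : ℝ) (hb : 0 < b) :
    ∃ C ≥ (1:ℝ), ∃ b' > (0:ℝ), ∀ x y : M, ∀ t > (0:ℝ),
      (1 / (μ (Metric.closedBall o (Real.sqrt t))).toReal) *
          Real.exp (-(b * ((dist o x ^ 2 + dist o y ^ 2) / t))) ≤
        (C / (μ (Metric.closedBall x (Real.sqrt t))).toReal) *
          Real.exp (-(b' * (dist x y ^ 2 / t))) := by
  set a := Real.log C_D
  have ha : 0 ≤ a := Real.log_nonneg hCD
  refine ⟨Real.exp (a + a ^ 2 / (2 * b)), Real.one_le_exp (by positivity), b / 4, by positivity,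
    fun x y t ht => ?_⟩
  have hst : 0 < √t := Real.sqrt_pos.2 ht
  have hVo : 0 < (μ (closedBall o √t)).toReal :=
    ENNReal.toReal_pos (hpos o _ hst).ne' (hfin o _ hst).ne
  have hVx : 0 < (μ (closedBall x √t)).toReal :=
    ENNReal.toReal_pos (hpos x _ hst).ne' (hfin x _ hst).ne
  have hvol := toReal_measure_closedBall_le_rpow_mul hCD (hdoub o) (hfin o _ hst).ne x hst
  rw [div_mul_eq_mul_div, div_mul_eq_mul_div, div_le_div_iff₀ hVo hVx, one_mul]
  calc Real.exp (-(b * ((dist o x ^ 2 + dist o y ^ 2) / t))) * (μ (closedBall x √t)).toReal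
      ≤ Real.exp (-(b * ((dist o x ^ 2 + dist o y ^ 2) / t))) *
          (C_D ^ (1 + dist o x / √t) * (μ (closedBall o √t)).toReal) := by gcongr
    _ = Real.exp (a * (1 + dist o x / √t) - b * ((dist o x ^ 2 + dist o y ^ 2) / t)) *
          (μ (closedBall o √t)).toReal := by
      rw [Real.rpow_def_of_pos (by linarith), sub_eq_add_neg, Real.exp_add]; ring
    _ ≤ Real.exp (a + a ^ 2 / (2 * b) - b / 4 * (dist x y ^ 2 / t)) *
          (μ (closedBall o √t)).toReal :=
      mul_le_mul_of_nonneg_right (Real.exp_le_exp.2 <|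
        gaussian_exponent_le a hb ht dist_nonneg (dist_triangle_left x y o)) hVo.le
    _ = Real.exp (a + a ^ 2 / (2 * b)) * Real.exp (-(b / 4 * (dist x y ^ 2 / t))) *
          (μ (closedBall o √t)).toReal := by
      rw [sub_eq_add_neg, Real.exp_add]

/-- On a metric space with a doubling Borel measure and reference point `o`,
for every `b > 0` there are `C ≥ 1` and `b' > 0` such that for all `x, y` and
`t > 0`:
`(1/μ(B(o,√t))) exp(−b(d(o,x)²+d(o,y)²)/t) ≤ (C/μ(B(x,√t))) exp(−b' d(x,y)²/t)`. -/
theorem stmt_17 {M : Type*} [MetricSpace M] [MeasurableSpace M] [BorelSpace M]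
    (μ : Measure M) (C_D : ℝ) (hCD : 1 ≤ C_D)
    (hpos : ∀ (x : M) (r : ℝ), 0 < r → 0 < μ (Metric.closedBall x r))
    (hfin : ∀ (x : M) (r : ℝ), 0 < r → μ (Metric.closedBall x r) < ⊤)
    (hdoub : ∀ (x : M) (r : ℝ), 0 < r →
      μ (Metric.closedBall x (2 * r)) ≤ ENNReal.ofReal C_D * μ (Metric.closedBall x r))
    (o : M) (b : ℝ) (hb : 0 < b) :
    ∃ C ≥ (1:ℝ), ∃ b' > (0:ℝ), ∀ x y : M, ∀ t > (0:ℝ),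
      (1 / (μ (Metric.closedBall o (Real.sqrt t))).toReal) *
          Real.exp (-(b * ((dist o x ^ 2 + dist o y ^ 2) / t))) ≤
        (C / (μ (Metric.closedBall x (Real.sqrt t))).toReal) *
          Real.exp (-(b' * (dist x y ^ 2 / t))) :=
  stmt_17_general μ C_D hCD hpos hfin hdoub o b hb
end

section
/- Let (M, d) be a metric space equipped with a Borel measure μ that is doubling: there is C_D ≥ 1 such that 0 < μ(B(x, 2r)) ≤ C_D·μ(B(x, r)) < ∞ for all x ∈ M and r > 0, where B(x,r) is the closed ball of radius r about x. Fix o ∈ M and set V(r) := μ(B(o, r)). Assume that ∫₁^∞ s/V(s) ds = ∞ and that there is C₀ > 0 with ∫₁^r s/V(s) ds ≤ C₀·r²/V(r) for all r ≥ 1. Then for every b > 0 there exist constants C ≥ 1, b' > 0 and t₀ ≥ 1 such that for all x, y ∈ M and all t ≥ t₀: ((log t)/t)·exp(−b·(d(o,x)² + d(o,y)²)/t) ≤ (C/μ(B(x,√t)))·exp(−b'·d(x,y)²/t). -/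
open MeasureTheory Filter

section AuxStmt18
open Real intervalIntegral




lemma aux_exch {a c : ℝ} (ha : 0 < a) (hc : 0 < c) :
    a ^ Real.logb 2 c = c ^ Real.logb 2 a := by
  rw [Real.rpow_def_of_pos ha, Real.rpow_def_of_pos hc, Real.logb, Real.logb]
  ring_nf

lemma aux_growth (V : ℝ → ℝ) (hm : Monotone V) (hVpos : ∀ r : ℝ, 0 < r → 0 < V r)
    (C₀ : ℝ) (hC₀ : 0 < C₀)
    (hsub : ∀ r ≥ (1:ℝ), (∫ s in (1:ℝ)..r, s / V s) ≤ C₀ * r ^ 2 / V r) :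
    ∃ B > 0, ∀ t ≥ (4:ℝ), V (Real.sqrt t) * (Real.log t / t) ≤ B := by
  have hmeas : Measurable V := hm.measurable
  have key : ∀ p q : ℝ, 1 ≤ p → p ≤ q →
      IntervalIntegrable (fun s => s / V s) volume p q := by
    intro p q hp hpq
    rw [intervalIntegrable_iff_integrableOn_Ioc_of_le hpq]
    apply Measure.integrableOn_of_bounded (M := q / V 1) measure_Ioc_lt_top.ne
    · exact ((measurable_id.div hmeas).aestronglyMeasurable)
    · rw [ae_restrict_iff' measurableSet_Ioc]
      filter_upwards with s hs
      have hV1 : 0 < V 1 := hVpos 1 one_pos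
      have hVs : V 1 ≤ V s := hm (le_of_lt (lt_of_le_of_lt hp hs.1))
      have hs0 : 0 < s := lt_of_le_of_lt (le_trans zero_le_one hp) hs.1
      rw [Real.norm_eq_abs, abs_of_nonneg (div_nonneg hs0.le (hV1.trans_le hVs).le)]
      exact div_le_div₀ (le_trans (zero_le_one.trans hp) hpq) hs.2 hV1 hVs
  have hint : ∀ a c : ℝ, 1 ≤ a → 1 ≤ c →
      IntervalIntegrable (fun s => s / V s) volume a c := by
    intro a c ha hc
    rcases le_total a c with h | h
    · exact key a c ha h
    · exact (key c a hc h).symm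
  set F : ℝ → ℝ := fun r => ∫ s in (1:ℝ)..r, s / V s with hF
  have hF0 : ∀ r, 1 ≤ r → 0 ≤ F r := by
    intro r hr
    apply intervalIntegral.integral_nonneg hr
    intro s hs
    exact div_nonneg (le_trans zero_le_one hs.1) (hVpos s (lt_of_lt_of_le one_pos hs.1)).le
  -- increment lower bound
  have hincr : ∀ r : ℝ, 1 ≤ r → (3/2) * r^2 / V (2*r) ≤ F (2*r) - F r := by
    intro r hr
    have hr2 : (1:ℝ) ≤ 2*r := by linarith
    have hadj : F r + (∫ s in r..(2*r), s / V s) = F (2*r) :=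
      intervalIntegral.integral_add_adjacent_intervals (hint 1 r le_rfl hr) (hint r (2*r) hr hr2)
    have hV2r : 0 < V (2*r) := hVpos _ (by linarith)
    have hlow : (∫ s in r..(2*r), s / V (2*r)) ≤ ∫ s in r..(2*r), s / V s := by
      apply intervalIntegral.integral_mono_on (by linarith)
        (intervalIntegrable_id.div_const _) (hint r (2*r) hr hr2)
      intro s hs
      have hs0 : 0 < s := lt_of_lt_of_le (lt_of_lt_of_le one_pos hr) hs.1
      exact div_le_div_of_nonneg_left hs0.le (hVpos s hs0) (hm hs.2)
    have hval : (∫ s in r..(2*r), s / V (2*r)) = (3/2) * r^2 / V (2*r) := by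
      rw [intervalIntegral.integral_div, integral_id]
      ring
    linarith [hlow, hval, hadj]
  -- doubling of F
  set θ : ℝ := min (3/(8*C₀)) (1/2) with hθdef
  have hθpos : 0 < θ := lt_min (by positivity) (by norm_num)
  have hθle : θ ≤ 1/2 := min_le_right _ _
  have h1θ : (1:ℝ)/2 ≤ 1 - θ := by linarith
  set K : ℝ := (1 - θ)⁻¹ with hKdef
  have hK1 : 1 < K := by
    rw [hKdef]
    rw [lt_inv_comm₀ one_pos (by linarith)]
    · simpa using by linarith
  have hK2 : K ≤ 2 := by
    rw [hKdef, inv_le_comm₀ (by linarith) two_pos]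
    linarith
  have hstep : ∀ r : ℝ, 1 ≤ r → K * F r ≤ F (2*r) := by
    intro r hr
    have h1 := hincr r hr
    have hsub2 := hsub (2*r) (by linarith)
    have hV2r : 0 < V (2*r) := hVpos _ (by linarith)
    have hF2r : 0 ≤ F (2*r) := hF0 _ (by linarith)
    -- θ * F(2r) ≤ (3/(8C₀)) * F(2r) ≤ 3/2 r^2 / V(2r)
    have h2 : θ * F (2*r) ≤ (3/(8*C₀)) * F (2*r) :=
      mul_le_mul_of_nonneg_right (min_le_left _ _) hF2r
    have h3 : (3/(8*C₀)) * F (2*r) ≤ (3/2) * r^2 / V (2*r) := by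
      have := mul_le_mul_of_nonneg_left hsub2 (le_of_lt (show (0:ℝ) < 3/(8*C₀) by positivity))
      calc (3/(8*C₀)) * F (2*r) ≤ (3/(8*C₀)) * (C₀ * (2*r) ^ 2 / V (2*r)) := this
        _ = (3/2) * r^2 / V (2*r) := by field_simp; ring
    have h4 : F r ≤ (1-θ) * F (2*r) := by nlinarith
    rw [hKdef]
    rw [inv_mul_le_iff₀ (by linarith)]
    linarith [h4]
  have hF2pos : 0 < F 2 := by
    have h1 := hincr 1 le_rfl
    have hF1 : F 1 = 0 := intervalIntegral.integral_same
    have hV2 : 0 < V 2 := hVpos 2 two_pos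
    have hpos2 : 0 < (3:ℝ)/2 * 1^2 / V 2 := by positivity
    have h21 : (2:ℝ)*1 = 2 := by norm_num
    rw [h21] at h1
    linarith
  have hFmono : ∀ p q : ℝ, 1 ≤ p → p ≤ q → F p ≤ F q := by
    intro p q hp hpq
    have hadj : F p + (∫ s in p..q, s / V s) = F q :=
      intervalIntegral.integral_add_adjacent_intervals (hint 1 p le_rfl hp)
        (hint p q hp (hp.trans hpq))
    have : 0 ≤ ∫ s in p..q, s / V s := by
      apply intervalIntegral.integral_nonneg hpq
      intro s hs
      exact div_nonneg (by linarith [hs.1, hp]) (hVpos s (by linarith [hs.1, hp])).le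
    linarith
  have hind : ∀ n : ℕ, K ^ n * F 2 ≤ F (2 ^ (n+1)) := by
    intro n
    induction n with
    | zero => simp
    | succ n ih =>
      have h2n : (1:ℝ) ≤ 2 ^ (n+1) := one_le_pow₀ (by norm_num)
      have := hstep (2 ^ (n+1)) h2n
      have heq : (2:ℝ) * 2 ^ (n+1) = 2 ^ (n+2) := by ring
      rw [heq] at this
      calc K ^ (n+1) * F 2 = K * (K ^ n * F 2) := by ring
        _ ≤ K * F (2 ^ (n+1)) := by
            exact mul_le_mul_of_nonneg_left ih (by linarith)
        _ ≤ F (2 ^ (n+2)) := this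
  set α : ℝ := Real.logb 2 K with hαdef
  have hα : 0 < α := Real.logb_pos one_lt_two hK1
  have hFlow : ∀ r : ℝ, 2 ≤ r → F 2 / K^2 * r ^ α ≤ F r := by
    intro r hr
    have hr0 : (0:ℝ) < r := by linarith
    set n : ℕ := ⌊Real.logb 2 r⌋₊ with hndef
    have hlogb1 : 1 ≤ Real.logb 2 r := by
      have := Real.logb_le_logb_of_le (b := 2) one_lt_two two_pos hr
      simpa using this
    have hn1 : 1 ≤ n := Nat.le_floor (by exact_mod_cast hlogb1)
    have hfl : (n : ℝ) ≤ Real.logb 2 r := Nat.floor_le (by linarith)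
    have hfl2 : Real.logb 2 r < (n : ℝ) + 1 := Nat.lt_floor_add_one _
    have h2n : (2:ℝ) ^ n ≤ r := by
      calc (2:ℝ) ^ n = (2:ℝ) ^ (n : ℝ) := by rw [Real.rpow_natCast]
        _ ≤ (2:ℝ) ^ Real.logb 2 r := Real.rpow_le_rpow_of_exponent_le one_le_two hfl
        _ = r := Real.rpow_logb two_pos (by norm_num) hr0
    have h2n1 : (1:ℝ) ≤ 2 ^ n := one_le_pow₀ one_le_two
    have hFr : F (2 ^ n) ≤ F r := hFmono _ _ h2n1 h2n
    obtain ⟨m, hnm⟩ : ∃ m, n = m + 1 := ⟨n - 1, by omega⟩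
    rw [hnm] at hFr hfl2 hfl
    have hKm : K ^ m * F 2 ≤ F (2 ^ (m+1)) := hind m
    -- K^m ≥ r^α / K^2
    have hKm2 : r ^ α / K^2 ≤ K ^ m := by
      have hK0 : (0:ℝ) < K := by linarith
      have hm2 : Real.logb 2 r - 2 ≤ (m : ℝ) := by
        push_cast at hfl2 ⊢
        linarith
      calc r ^ α / K^2 = K ^ Real.logb 2 r / K ^ (2:ℝ) := by
            rw [hαdef, aux_exch hr0 hK0, show K ^ (2:ℝ) = K ^ (2:ℕ) by
              rw [← Real.rpow_natCast K 2]; norm_num]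
        _ = K ^ (Real.logb 2 r - 2) := by rw [Real.rpow_sub hK0]
        _ ≤ K ^ (m : ℝ) := Real.rpow_le_rpow_of_exponent_le hK1.le hm2
        _ = K ^ m := Real.rpow_natCast K m
    calc F 2 / K^2 * r ^ α = (r ^ α / K^2) * F 2 := by ring
      _ ≤ K ^ m * F 2 := mul_le_mul_of_nonneg_right hKm2 hF2pos.le
      _ ≤ F (2 ^ (m+1)) := hKm
      _ ≤ F r := hFr
  -- upper bound on V
  set C₁ : ℝ := C₀ * K^2 / F 2 with hC₁def
  have hC₁pos : 0 < C₁ := by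
    have hK0 : (0:ℝ) < K := by linarith
    positivity
  have hVup : ∀ r : ℝ, 2 ≤ r → V r ≤ C₁ * r ^ ((2:ℝ) - α) := by
    intro r hr
    have hr0 : (0:ℝ) < r := by linarith
    have hVr : 0 < V r := hVpos r hr0
    have hFr : 0 < F r := lt_of_lt_of_le (by positivity) (hFlow r hr)
    have h1 : F r ≤ C₀ * r ^ 2 / V r := hsub r (by linarith)
    have h2 : V r ≤ C₀ * r ^ 2 / F r := by
      rw [le_div_iff₀ hFr]
      rw [le_div_iff₀ hVr] at h1
      linarith [h1]
    have h3 : C₀ * r ^ 2 / F r ≤ C₀ * r ^ 2 / (F 2 / K^2 * r ^ α) := by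
      apply div_le_div_of_nonneg_left (by positivity) (by positivity) (hFlow r hr)
    have h4 : C₀ * r ^ 2 / (F 2 / K^2 * r ^ α) = C₁ * r ^ ((2:ℝ) - α) := by
      rw [Real.rpow_sub hr0, hC₁def, Real.rpow_two]
      field_simp
    linarith
  -- conclusion
  refine ⟨C₁ * (2/α) + 1, by positivity, ?_⟩
  intro t ht
  have ht0 : (0:ℝ) < t := by linarith
  have hst : (2:ℝ) ≤ Real.sqrt t := by
    rw [show (2:ℝ) = Real.sqrt 4 by
      rw [show (4:ℝ) = 2^2 by norm_num, Real.sqrt_sq (by norm_num)]]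
    exact Real.sqrt_le_sqrt ht
  have hVs := hVup _ hst
  have hsq : Real.sqrt t ^ ((2:ℝ) - α) = t ^ ((1:ℝ) - α/2) := by
    rw [Real.sqrt_eq_rpow, ← Real.rpow_mul ht0.le]
    congr 1
    ring
  have hlog : Real.log t ≤ (2/α) * t ^ (α/2) := by
    have h1 : Real.log (t ^ (α/2)) ≤ t ^ (α/2) - 1 :=
      Real.log_le_sub_one_of_pos (Real.rpow_pos_of_pos ht0 _)
    rw [Real.log_rpow ht0] at h1
    have h2 : Real.log t = (2/α) * ((α/2) * Real.log t) := by field_simp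
    rw [h2]
    have h3 : (α/2) * Real.log t ≤ t ^ (α/2) := by linarith
    apply mul_le_mul_of_nonneg_left h3 (by positivity)
  have hVs0 : 0 ≤ V (Real.sqrt t) := (hVpos _ (by linarith)).le
  have hlog0 : 0 ≤ Real.log t := Real.log_nonneg (by linarith)
  calc V (Real.sqrt t) * (Real.log t / t)
      ≤ (C₁ * t ^ ((1:ℝ) - α/2)) * (((2/α) * t ^ (α/2)) / t) := by
        apply mul_le_mul (hsq ▸ hVs) _ (by positivity) (by positivity)
        exact div_le_div_of_nonneg_right hlog ht0.le
    _ = C₁ * (2/α) * (t ^ ((1:ℝ) - α/2) * t ^ ((α:ℝ)/2)) / t := by ring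
    _ = C₁ * (2/α) := by
        have h5 : t ^ ((1:ℝ) - α/2) * t ^ ((α:ℝ)/2) = t := by
          rw [← Real.rpow_add ht0, show (1:ℝ) - α/2 + α/2 = 1 by ring, Real.rpow_one]
        rw [h5, mul_div_assoc, div_self ht0.ne']
        ring
    _ ≤ C₁ * (2/α) + 1 := by linarith



lemma aux_exch' {a c : ℝ} (ha : 0 < a) (hc : 0 < c) :
    a ^ Real.logb 2 c = c ^ Real.logb 2 a := by
  rw [Real.rpow_def_of_pos ha, Real.rpow_def_of_pos hc, Real.logb, Real.logb]
  ring_nf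

lemma aux_doub (V : ℝ → ℝ) (hm : Monotone V) (hVnn : ∀ r : ℝ, 0 ≤ V r)
    (C_D : ℝ) (hCD : 1 ≤ C_D) (hd : ∀ r : ℝ, 0 < r → V (2*r) ≤ C_D * V r) :
    ∀ r : ℝ, 0 < r → ∀ d : ℝ, 0 ≤ d →
      V (d + r) ≤ C_D * (1 + d/r) ^ (Real.logb 2 C_D) * V r := by
  have hCD0 : (0:ℝ) < C_D := by linarith
  have hiter : ∀ k : ℕ, ∀ r : ℝ, 0 < r → V (2^k * r) ≤ C_D^k * V r := by
    intro k
    induction k with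
    | zero => intro r hr; simp
    | succ k ih =>
      intro r hr
      have h1 : (2:ℝ)^(k+1) * r = 2 * (2^k * r) := by ring
      have h2 : (0:ℝ) < 2^k * r := by positivity
      calc V (2^(k+1) * r) = V (2 * (2^k * r)) := by rw [h1]
        _ ≤ C_D * V (2^k * r) := hd _ h2
        _ ≤ C_D * (C_D^k * V r) := mul_le_mul_of_nonneg_left (ih r hr) hCD0.le
        _ = C_D^(k+1) * V r := by ring
  intro r hr d hd0
  set u : ℝ := d / r with hudef
  have hu : 0 ≤ u := div_nonneg hd0 hr.le
  have hdu : d = u * r := by rw [hudef, div_mul_cancel₀ _ hr.ne.symm]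
  set k : ℕ := ⌈Real.logb 2 (1 + u)⌉₊ with hkdef
  have hlb0 : 0 ≤ Real.logb 2 (1 + u) := Real.logb_nonneg one_lt_two (by linarith)
  have h2k : 1 + u ≤ 2^k := by
    calc (1:ℝ) + u = 2 ^ Real.logb 2 (1 + u) :=
          (Real.rpow_logb two_pos (by norm_num) (by linarith)).symm
      _ ≤ 2 ^ ((k:ℕ):ℝ) := Real.rpow_le_rpow_of_exponent_le one_le_two (Nat.le_ceil _)
      _ = 2 ^ k := Real.rpow_natCast 2 k
  have hmono : V (d + r) ≤ V (2^k * r) := by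
    apply hm
    rw [hdu]
    nlinarith
  have hCDk : (C_D:ℝ)^k ≤ C_D * (1 + u) ^ Real.logb 2 C_D := by
    calc (C_D:ℝ)^k = C_D ^ ((k:ℕ):ℝ) := (Real.rpow_natCast C_D k).symm
      _ ≤ C_D ^ (Real.logb 2 (1 + u) + 1) :=
          Real.rpow_le_rpow_of_exponent_le hCD (le_of_lt (Nat.ceil_lt_add_one hlb0))
      _ = C_D ^ Real.logb 2 (1 + u) * C_D := by
          rw [Real.rpow_add hCD0, Real.rpow_one]
      _ = C_D * (1 + u) ^ Real.logb 2 C_D := by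
          rw [aux_exch' hCD0 (by linarith : (0:ℝ) < 1 + u)]; ring
  calc V (d + r) ≤ V (2^k * r) := hmono
    _ ≤ C_D^k * V r := hiter k r hr
    _ ≤ (C_D * (1 + u) ^ Real.logb 2 C_D) * V r :=
        mul_le_mul_of_nonneg_right hCDk (hVnn r)
    _ = C_D * (1 + d/r) ^ Real.logb 2 C_D * V r := by rw [hudef]
open MeasureTheory Filter Real


variable {M : Type*} [MetricSpace M] [MeasurableSpace M] [BorelSpace M]

theorem stmt_18' (μ : Measure M) (C_D : ℝ) (hCD : 1 ≤ C_D)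
    (hpos : ∀ (x : M) (r : ℝ), 0 < r → 0 < μ (Metric.closedBall x r))
    (hfin : ∀ (x : M) (r : ℝ), 0 < r → μ (Metric.closedBall x r) < ⊤)
    (hdoub : ∀ (x : M) (r : ℝ), 0 < r →
      μ (Metric.closedBall x (2 * r)) ≤ ENNReal.ofReal C_D * μ (Metric.closedBall x r))
    (o : M)
    (C₀ : ℝ) (hC₀ : 0 < C₀)
    (hsub : ∀ r ≥ (1:ℝ),
      (∫ s in (1:ℝ)..r, s / (μ (Metric.closedBall o s)).toReal) ≤
        C₀ * r ^ 2 / (μ (Metric.closedBall o r)).toReal)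
    (b : ℝ) (hb : 0 < b) :
    ∃ C ≥ (1:ℝ), ∃ b' > (0:ℝ), ∃ t₀ ≥ (1:ℝ), ∀ x y : M, ∀ t ≥ t₀,
      (Real.log t / t) * Real.exp (-(b * ((dist o x ^ 2 + dist o y ^ 2) / t))) ≤
        (C / (μ (Metric.closedBall x (Real.sqrt t))).toReal) *
          Real.exp (-(b' * (dist x y ^ 2 / t))) := by
  have hfin' : ∀ (x : M) (r : ℝ), μ (Metric.closedBall x r) ≠ ⊤ := by
    intro x r
    have h1 : r ≤ |r| + 1 := by
      have := le_abs_self r; linarith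
    have h2 : (0:ℝ) < |r| + 1 := by positivity
    exact ((measure_mono (Metric.closedBall_subset_closedBall h1)).trans_lt (hfin x _ h2)).ne
  set V : ℝ → ℝ := fun r => (μ (Metric.closedBall o r)).toReal with hVdef
  have hVmono : Monotone V := fun r r' h =>
    ENNReal.toReal_mono (hfin' o r') (measure_mono (Metric.closedBall_subset_closedBall h))
  have hVpos : ∀ r : ℝ, 0 < r → 0 < V r := fun r hr =>
    ENNReal.toReal_pos (hpos o r hr).ne' (hfin' o r)
  have hVd : ∀ r : ℝ, 0 < r → V (2*r) ≤ C_D * V r := by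
    intro r hr
    calc V (2*r) ≤ (ENNReal.ofReal C_D * μ (Metric.closedBall o r)).toReal :=
          ENNReal.toReal_mono (ENNReal.mul_ne_top ENNReal.ofReal_ne_top (hfin' o r))
            (hdoub o r hr)
      _ = C_D * V r := by
          rw [ENNReal.toReal_mul, ENNReal.toReal_ofReal (by linarith : (0:ℝ) ≤ C_D)]
  obtain ⟨B, hB, hVB⟩ := aux_growth V hVmono hVpos C₀ hC₀ hsub
  set β : ℝ := Real.logb 2 C_D with hβdef
  have hβ0 : 0 ≤ β := Real.logb_nonneg one_lt_two hCD
  set A : ℝ := C_D * Real.exp (β^2/(2*b)) with hAdef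
  have hA0 : 0 < A := by positivity
  refine ⟨max 1 (A*B), le_max_left _ _, b/4, by positivity, 4, by norm_num, ?_⟩
  intro x y t ht
  have ht0 : (0:ℝ) < t := by linarith
  have hlog0 : 0 ≤ Real.log t := Real.log_nonneg (by linarith)
  set s : ℝ := Real.sqrt t with hsdef
  have hs2 : (2:ℝ) ≤ s := by
    rw [hsdef, show (2:ℝ) = Real.sqrt 4 by
      rw [show (4:ℝ) = 2^2 by norm_num, Real.sqrt_sq (by norm_num)]]
    exact Real.sqrt_le_sqrt ht
  have hs0 : (0:ℝ) < s := by linarith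
  have hst : s^2 = t := Real.sq_sqrt ht0.le
  set m : ℝ := (μ (Metric.closedBall x s)).toReal with hmdef
  have hm0 : 0 < m := ENNReal.toReal_pos (hpos x s hs0).ne' (hfin' x s)
  set d : ℝ := dist o x with hddef
  have hd0 : 0 ≤ d := dist_nonneg
  have hmV : m ≤ V (d + s) := by
    apply ENNReal.toReal_mono (hfin' o _)
    apply measure_mono
    intro z hz
    rw [Metric.mem_closedBall] at hz ⊢
    calc dist z o ≤ dist z x + dist x o := dist_triangle z x o
      _ ≤ s + d := add_le_add hz (by rw [hddef, dist_comm])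
      _ = d + s := by ring
  have hdoubV := aux_doub V hVmono (fun r => ENNReal.toReal_nonneg) C_D hCD hVd s hs0 d hd0
  set u : ℝ := d / s with hudef
  have hu0 : 0 ≤ u := div_nonneg hd0 hs0.le
  have hXt : d^2 / t = u^2 := by
    rw [hudef, div_pow, hst]
  have hpow : (1+u)^β ≤ Real.exp (β*u) := by
    have hl : Real.log (1+u) ≤ u := by
      have := Real.log_le_sub_one_of_pos (show (0:ℝ) < 1+u by linarith)
      linarith
    calc (1+u)^β = Real.exp (Real.log (1+u) * β) :=
          Real.rpow_def_of_pos (by linarith) β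
      _ ≤ Real.exp (β*u) := by
          apply Real.exp_le_exp.mpr
          calc Real.log (1+u) * β ≤ u * β := mul_le_mul_of_nonneg_right hl hβ0
            _ = β * u := by ring
  set Y : ℝ := dist o y with hYdef
  have hY0 : 0 ≤ Y := dist_nonneg
  set E : ℝ := Real.exp (-(b/2 * ((d ^ 2 + Y ^ 2) / t))) with hEdef
  have hEsplit : Real.exp (-(b * ((d ^ 2 + Y ^ 2) / t))) = E * E := by
    rw [hEdef, ← Real.exp_add]
    congr 1
    ring
  have hZ : dist x y ^ 2 ≤ 2 * (d ^ 2 + Y ^ 2) := by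
    have htri : dist x y ≤ d + Y := by
      rw [hddef, hYdef, dist_comm o x]
      exact dist_triangle x o y
    nlinarith [sq_nonneg (d - Y), dist_nonneg (x := x) (y := y)]
  have h1 : E ≤ Real.exp (-(b/4 * (dist x y ^ 2 / t))) := by
    apply Real.exp_le_exp.mpr
    apply neg_le_neg
    calc b/4 * (dist x y ^ 2 / t) = (b/4 * dist x y ^ 2) / t := by ring
      _ ≤ (b/2 * (d ^ 2 + Y ^ 2)) / t := by
          apply div_le_div_of_nonneg_right _ ht0.le
          have h4 : b/4 * dist x y ^ 2 ≤ b/4 * (2 * (d ^ 2 + Y ^ 2)) :=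
            mul_le_mul_of_nonneg_left hZ (by positivity)
          linarith
      _ = b/2 * ((d ^ 2 + Y ^ 2) / t) := by ring
  have h2 : E ≤ Real.exp (-(b/2 * u^2)) := by
    apply Real.exp_le_exp.mpr
    apply neg_le_neg
    rw [← hXt]
    have hq : d^2 / t ≤ (d ^ 2 + Y ^ 2) / t :=
      div_le_div_of_nonneg_right (le_add_of_nonneg_right (sq_nonneg Y)) ht0.le
    exact mul_le_mul_of_nonneg_left hq (by linarith)
  rw [← hβdef] at hdoubV
  clear_value V β A s m d u Y E
  have hE2 : E * m ≤ A * V s := by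
    calc E * m ≤ Real.exp (-(b/2 * u^2)) * (C_D * (1 + u) ^ β * V s) :=
          mul_le_mul h2 (hmV.trans hdoubV) hm0.le (Real.exp_nonneg _)
      _ = (C_D * ((1+u)^β * Real.exp (-(b/2 * u^2)))) * V s := by ring
      _ ≤ (C_D * Real.exp (β^2/(2*b))) * V s := by
          apply mul_le_mul_of_nonneg_right _ (hVpos s hs0).le
          apply mul_le_mul_of_nonneg_left _ (by linarith : (0:ℝ) ≤ C_D)
          calc (1+u)^β * Real.exp (-(b/2 * u^2))
              ≤ Real.exp (β*u) * Real.exp (-(b/2 * u^2)) :=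
                mul_le_mul_of_nonneg_right hpow (Real.exp_nonneg _)
            _ = Real.exp (β*u - b/2 * u^2) := by rw [← Real.exp_add, sub_eq_add_neg]
            _ ≤ Real.exp (β^2/(2*b)) := by
                apply Real.exp_le_exp.mpr
                rw [le_div_iff₀ (by positivity : (0:ℝ) < 2*b)]
                nlinarith [sq_nonneg (b*u - β)]
      _ = A * V s := by rw [hAdef]
  have hmain : (Real.log t / t) * (E * m) ≤ A * B := by
    calc (Real.log t / t) * (E * m) ≤ (Real.log t / t) * (A * V s) :=
          mul_le_mul_of_nonneg_left hE2 (div_nonneg hlog0 ht0.le)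
      _ = A * (V s * (Real.log t / t)) := by ring
      _ ≤ A * B := by
          apply mul_le_mul_of_nonneg_left _ hA0.le
          rw [hsdef]
          exact hVB t ht
  have hrw : (max 1 (A*B)) / m * Real.exp (-(b/4 * (dist x y ^ 2 / t)))
      = (max 1 (A*B) * Real.exp (-(b/4 * (dist x y ^ 2 / t)))) / m := by ring
  rw [hrw, le_div_iff₀ hm0]
  calc Real.log t / t * Real.exp (-(b * ((d ^ 2 + Y ^ 2) / t))) * m
      = E * ((Real.log t / t) * (E * m)) := by rw [hEsplit]; ring
    _ ≤ Real.exp (-(b/4 * (dist x y ^ 2 / t))) * (A * B) := by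
        apply mul_le_mul h1 hmain _ (Real.exp_nonneg _)
        apply mul_nonneg (div_nonneg hlog0 ht0.le) (mul_nonneg _ hm0.le)
        rw [hEdef]
        exact Real.exp_nonneg _
    _ ≤ Real.exp (-(b/4 * (dist x y ^ 2 / t))) * max 1 (A*B) :=
        mul_le_mul_of_nonneg_left (le_max_right _ _) (Real.exp_nonneg _)
    _ = max 1 (A*B) * Real.exp (-(b/4 * (dist x y ^ 2 / t))) := by ring


end AuxStmt18

/-- On a metric space with a doubling Borel measure whose volume function
`V(r) = μ(B(o,r))` at the reference point `o` is parabolic and subcritical,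
for every `b > 0` there are `C ≥ 1`, `b' > 0`, `t₀ ≥ 1` such that for all
`x, y` and `t ≥ t₀`:
`(log t / t) exp(−b(d(o,x)²+d(o,y)²)/t) ≤ (C/μ(B(x,√t))) exp(−b' d(x,y)²/t)`. -/
theorem stmt_18 {M : Type*} [MetricSpace M] [MeasurableSpace M] [BorelSpace M]
    (μ : Measure M) (C_D : ℝ) (hCD : 1 ≤ C_D)
    (hpos : ∀ (x : M) (r : ℝ), 0 < r → 0 < μ (Metric.closedBall x r))
    (hfin : ∀ (x : M) (r : ℝ), 0 < r → μ (Metric.closedBall x r) < ⊤)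
    (hdoub : ∀ (x : M) (r : ℝ), 0 < r →
      μ (Metric.closedBall x (2 * r)) ≤ ENNReal.ofReal C_D * μ (Metric.closedBall x r))
    (o : M)
    (hpar : ∫⁻ s in Set.Ici (1:ℝ),
      ENNReal.ofReal (s / (μ (Metric.closedBall o s)).toReal) = ⊤)
    (C₀ : ℝ) (hC₀ : 0 < C₀)
    (hsub : ∀ r ≥ (1:ℝ),
      (∫ s in (1:ℝ)..r, s / (μ (Metric.closedBall o s)).toReal) ≤
        C₀ * r ^ 2 / (μ (Metric.closedBall o r)).toReal)
    (b : ℝ) (hb : 0 < b) :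
    ∃ C ≥ (1:ℝ), ∃ b' > (0:ℝ), ∃ t₀ ≥ (1:ℝ), ∀ x y : M, ∀ t ≥ t₀,
      (Real.log t / t) * Real.exp (-(b * ((dist o x ^ 2 + dist o y ^ 2) / t))) ≤
        (C / (μ (Metric.closedBall x (Real.sqrt t))).toReal) *
          Real.exp (-(b' * (dist x y ^ 2 / t))) := by
  exact stmt_18' μ C_D hCD hpos hfin hdoub o C₀ hC₀ hsub b hb
end

section
/- Let V : [1,∞) → (0,∞) be nondecreasing and suppose there is a constant C₀ > 0 with ∫₁^r s/V(s) ds ≤ C₀·r²/V(r) for all r ≥ 1. Then there exist constants c, C > 0 such that for all t ≥ 2: c·t/V(√t) ≤ ∫₁^t ds/V(√s) ≤ C·t/V(√t). -/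
open MeasureTheory Filter

/-- For a nondecreasing positive subcritical `V` on `[1,∞)`, the central
integral `∫₁^t ds/V(√s)` is comparable to `t/V(√t)` for `t ≥ 2`. -/
theorem stmt_19 (V : ℝ → ℝ)
    (hVpos : ∀ r ∈ Set.Ici (1:ℝ), 0 < V r)
    (hVmono : MonotoneOn V (Set.Ici (1:ℝ)))
    (C₀ : ℝ) (hC₀ : 0 < C₀)
    (hsub : ∀ r ≥ (1:ℝ), (∫ s in (1:ℝ)..r, s / V s) ≤ C₀ * r ^ 2 / V r) :
    ∃ c > (0:ℝ), ∃ C > (0:ℝ), ∀ t ≥ (2:ℝ),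
      c * t / V (Real.sqrt t) ≤ (∫ s in (1:ℝ)..t, 1 / V (Real.sqrt s)) ∧
      (∫ s in (1:ℝ)..t, 1 / V (Real.sqrt s)) ≤ C * t / V (Real.sqrt t) := by
  refine ⟨1/2, by norm_num, 2*C₀, by positivity, fun t ht => ?_⟩
  have ht1 : (1:ℝ) ≤ t := by linarith
  have sqrt_ge : ∀ a : ℝ, 1 ≤ a → (1:ℝ) ≤ Real.sqrt a := by
    intro a ha
    rw [show (1:ℝ) = Real.sqrt 1 by simp]
    exact Real.sqrt_le_sqrt ha
  have hst : (1:ℝ) ≤ Real.sqrt t := sqrt_ge t ht1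
  have hVt : 0 < V (Real.sqrt t) := hVpos _ hst
  have hant : AntitoneOn (fun s => 1 / V (Real.sqrt s)) (Set.Ici (1:ℝ)) := by
    intro a ha b hb hab
    have ha1 := sqrt_ge a ha
    have hb1 := sqrt_ge b hb
    have hVab : V (Real.sqrt a) ≤ V (Real.sqrt b) :=
      hVmono ha1 hb1 (Real.sqrt_le_sqrt hab)
    exact one_div_le_one_div_of_le (hVpos _ ha1) hVab
  have hint : ∀ a b : ℝ, 1 ≤ a → a ≤ b →
      IntervalIntegrable (fun s => 1 / V (Real.sqrt s)) volume a b := by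
    intro a b ha hab
    refine (hant.mono ?_).intervalIntegrable
    rw [Set.uIcc_of_le hab]
    exact fun x hx => le_trans ha hx.1
  have htt2 : (1:ℝ) ≤ t/2 := by linarith
  have ht2t : t/2 ≤ t := by linarith
  constructor
  · -- lower bound
    have hsplit : (∫ s in (1:ℝ)..(t/2), 1 / V (Real.sqrt s)) +
        (∫ s in (t/2)..t, 1 / V (Real.sqrt s)) =
        ∫ s in (1:ℝ)..t, 1 / V (Real.sqrt s) :=
      intervalIntegral.integral_add_adjacent_intervals
        (hint 1 (t/2) le_rfl htt2) (hint (t/2) t htt2 ht2t)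
    have h1 : (0:ℝ) ≤ ∫ s in (1:ℝ)..(t/2), 1 / V (Real.sqrt s) := by
      apply intervalIntegral.integral_nonneg htt2
      intro u hu
      exact le_of_lt (one_div_pos.2 (hVpos _ (sqrt_ge u hu.1)))
    have h2 : (t/2) * (1 / V (Real.sqrt t)) ≤ ∫ s in (t/2)..t, 1 / V (Real.sqrt s) := by
      have := intervalIntegral.integral_mono_on (f := fun _ : ℝ => 1 / V (Real.sqrt t))
        (g := fun s => 1 / V (Real.sqrt s)) ht2t
        (intervalIntegrable_const) (hint (t/2) t htt2 ht2t)
        (fun x hx => by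
          have hx1 : (1:ℝ) ≤ x := le_trans htt2 hx.1
          exact one_div_le_one_div_of_le (hVpos _ (sqrt_ge x hx1))
            (hVmono (sqrt_ge x hx1) hst (Real.sqrt_le_sqrt hx.2)))
      rwa [intervalIntegral.integral_const, smul_eq_mul,
        show t - t/2 = t/2 by ring] at this
    have : (t/2) * (1 / V (Real.sqrt t)) ≤ ∫ s in (1:ℝ)..t, 1 / V (Real.sqrt s) := by
      rw [← hsplit]; linarith
    calc 1/2 * t / V (Real.sqrt t) = (t/2) * (1 / V (Real.sqrt t)) := by ring
      _ ≤ _ := this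
  · -- upper bound via substitution s = u²
    have himg : (fun u : ℝ => u ^ 2) '' Set.Icc 1 (Real.sqrt t) = Set.Icc 1 t := by
      ext x
      constructor
      · rintro ⟨u, hu, rfl⟩
        constructor
        · show (1:ℝ) ≤ u ^ 2
          nlinarith [hu.1]
        · show u ^ 2 ≤ t
          calc u^2 ≤ (Real.sqrt t)^2 := by nlinarith [hu.1, hu.2]
            _ = t := Real.sq_sqrt (by linarith)
      · intro hx
        refine ⟨Real.sqrt x, ⟨sqrt_ge x hx.1, Real.sqrt_le_sqrt hx.2⟩, ?_⟩
        exact Real.sq_sqrt (by linarith [hx.1])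
    have hderiv : ∀ u ∈ Set.Icc (1:ℝ) (Real.sqrt t),
        HasDerivWithinAt (fun u : ℝ => u ^ 2) (2 * u) (Set.Icc 1 (Real.sqrt t)) u := by
      intro u _
      simpa using (hasDerivAt_pow 2 u).hasDerivWithinAt
    have hinj : Set.InjOn (fun u : ℝ => u ^ 2) (Set.Icc 1 (Real.sqrt t)) := by
      intro a ha b hb h
      simp only at h
      nlinarith [ha.1, hb.1]
    have hsubst : (∫ s in Set.Icc (1:ℝ) t, 1 / V (Real.sqrt s)) =
        ∫ u in Set.Icc (1:ℝ) (Real.sqrt t), |2 * u| • (1 / V (Real.sqrt (u ^ 2))) := by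
      rw [← himg]
      exact integral_image_eq_integral_abs_deriv_smul measurableSet_Icc hderiv hinj _
    have hcongr : (∫ u in Set.Icc (1:ℝ) (Real.sqrt t), |2 * u| • (1 / V (Real.sqrt (u ^ 2)))) =
        ∫ u in Set.Icc (1:ℝ) (Real.sqrt t), 2 * (u / V u) := by
      apply setIntegral_congr_fun measurableSet_Icc
      intro u hu
      have hu0 : (0:ℝ) ≤ u := by linarith [hu.1]
      show |2 * u| • (1 / V (Real.sqrt (u ^ 2))) = 2 * (u / V u)
      rw [Real.sqrt_sq hu0, abs_of_nonneg (by linarith : (0:ℝ) ≤ 2*u), smul_eq_mul]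
      ring
    have hIoc : (∫ s in (1:ℝ)..t, 1 / V (Real.sqrt s)) =
        ∫ s in Set.Icc (1:ℝ) t, 1 / V (Real.sqrt s) := by
      rw [intervalIntegral.integral_of_le ht1, ← integral_Icc_eq_integral_Ioc]
    have hIoc2 : (∫ u in Set.Icc (1:ℝ) (Real.sqrt t), 2 * (u / V u)) =
        ∫ u in (1:ℝ)..(Real.sqrt t), 2 * (u / V u) := by
      rw [intervalIntegral.integral_of_le hst, ← integral_Icc_eq_integral_Ioc]
    have hfinal : (∫ s in (1:ℝ)..t, 1 / V (Real.sqrt s)) =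
        2 * ∫ u in (1:ℝ)..(Real.sqrt t), u / V u := by
      rw [hIoc, hsubst, hcongr, hIoc2, intervalIntegral.integral_const_mul]
    rw [hfinal]
    have hb := hsub (Real.sqrt t) hst
    rw [Real.sq_sqrt (by linarith : (0:ℝ) ≤ t)] at hb
    calc 2 * ∫ u in (1:ℝ)..(Real.sqrt t), u / V u ≤ 2 * (C₀ * t / V (Real.sqrt t)) := by
          linarith
      _ = 2 * C₀ * t / V (Real.sqrt t) := by ring
end
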